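/- arXiv:1110.5014 — 11 statements merged into one kernel-verified Lean document; each statement's English description precedes it below -/
import Mathlib

section
/- For all n ≥ 1 and k ≥ 1, the number R(n,k) of permutations of {1,...,n} with k alternating runs satisfies the recurrence R(n,k) = k·R(n-1,k) + 2·R(n-1,k-1) + (n-k)·R(n-1,k-2), with initial values R(1,0) = 1 and R(1,k) = 0 for k ≥ 1. -/
open Finset Polynomial

/-- `pval π i` is the value `π(i+1)` of the permutation in one-based value convention
(values `1,…,n`), and `0` for indices out of range. -/
def pval {n : ℕ} (π : Equiv.Perm (Fin n)) (i : ℕ) : ℕ :=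
  if h : i < n then (π ⟨i, h⟩ : ℕ) + 1 else 0

/-- number of positions where `π` changes direction -/
def dirChanges {n : ℕ} (π : Equiv.Perm (Fin n)) : ℕ :=
  ((Finset.Ioo 0 (n - 1)).filter (fun i =>
    (pval π (i-1) < pval π i ∧ pval π (i+1) < pval π i) ∨
    (pval π i < pval π (i-1) ∧ pval π i < pval π (i+1)))).card

/-- number of alternating runs of `π` (one more than the number of direction
changes; `0` by convention when `n ≤ 1`). -/
def altRuns {n : ℕ} (π : Equiv.Perm (Fin n)) : ℕ :=
  if n ≤ 1 then 0 else dirChanges π + 1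

/-- `R(n,k)`: the number of permutations of `[n]` with `k` alternating runs. -/
def runNum (n k : ℕ) : ℕ :=
  (Finset.univ.filter (fun π : Equiv.Perm (Fin n) => altRuns π = k)).card

/-!
Every permutation of `[m + 1]` arises exactly once by inserting the value `m + 1` into one of the
`m + 1` slots of a permutation `σ` of `[m]`. The number of alternating runs is one more than the
number of direction changes in the descent word of `σ`, and the insertion acts locally on that
word (`List.insertPeak`). If `σ` has `r` runs, then `r` of the slots keep the number of runs, two
slots raise it by one, and the remaining `m - 1 - r` slots raise it by two.
-/

namespace List

variable {α : Type*}

def numChanges [DecidableEq α] : List α → ℕ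
  | a :: b :: t => (if a = b then 0 else 1) + numChanges (b :: t)
  | _ => 0

def descents [LinearOrder α] : List α → List Bool
  | a :: b :: t => decide (b < a) :: descents (b :: t)
  | _ => []

/-- The descent word of `l.insertIdx j M`, for `M` above every entry of `l`, in terms of the
descent word of `l`: an inner slot `j` turns letter `j - 1` into an ascent into `M` followed by a
descent, the end slots prepend a descent or append an ascent. -/
def insertPeak : List Bool → ℕ → List Bool
  | d, 0 => true :: d
  | [], _ => [false]
  | _ :: d, 1 => false :: true :: d
  | b :: d, j + 2 => b :: insertPeak d (j + 1)

theorem numChanges_le_length_sub_one [DecidableEq α] :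
    ∀ l : List α, l.numChanges ≤ l.length - 1
  | [] | [_] => by simp [numChanges]
  | a :: b :: t => by
    have := numChanges_le_length_sub_one (b :: t)
    simp only [numChanges, length_cons] at *
    split <;> omega

theorem numChanges_ofFn [DecidableEq α] : ∀ (m : ℕ) (g : ℕ → α),
    (ofFn fun i : Fin m => g i).numChanges = #{i ∈ Finset.range (m - 1) | g i ≠ g (i + 1)}
  | 0, _ | 1, _ => rfl
  | m + 2, g => by
    have ih := numChanges_ofFn (m + 1) (fun i => g (i + 1))
    rw [ofFn_succ] at ih
    rw [ofFn_succ, ofFn_succ]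
    simp only [Fin.val_zero, Fin.val_succ] at ih ⊢
    rw [numChanges, ih, card_filter, card_filter]
    simp [Finset.sum_range_succ' _ m, add_comm]

theorem length_descents [LinearOrder α] : ∀ l : List α, l.descents.length = l.length - 1
  | [] | [_] => rfl
  | a :: b :: t => by simp [descents, length_descents (b :: t)]

theorem descents_ofFn [LinearOrder α] : ∀ (m : ℕ) (g : ℕ → α),
    (ofFn fun i : Fin m => g i).descents = ofFn fun i : Fin (m - 1) => decide (g (i + 1) < g i)
  | 0, _ | 1, _ => rfl
  | m + 2, g => by
    have ih := descents_ofFn (m + 1) (fun i => g (i + 1))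
    rw [ofFn_succ] at ih
    rw [ofFn_succ, ofFn_succ]
    simp only [Fin.val_zero, Fin.val_succ] at ih ⊢
    simp [descents, ih, ofFn_succ]

theorem descents_map_of_strictMono {β : Type*} [LinearOrder α] [LinearOrder β] {f : α → β}
    (hf : StrictMono f) : ∀ l : List α, (l.map f).descents = l.descents
  | [] | [_] => rfl
  | a :: b :: t => by
    simp [descents, hf.lt_iff_lt, ← descents_map_of_strictMono hf (b :: t)]

theorem descents_insertIdx_of_forall_lt [LinearOrder α] {M : α} :
    ∀ (l : List α) (j : ℕ), l ≠ [] → j ≤ l.length → (∀ x ∈ l, x < M) →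
      (l.insertIdx j M).descents = l.descents.insertPeak j
  | a :: t, 0, _, _, hM => by
    cases t <;> simp [descents, insertPeak, hM a (by simp)]
  | [a], 1, _, _, hM => by
    simp [descents, insertPeak, (hM a (by simp)).not_gt]
  | a :: b :: t, 1, _, _, hM => by
    simp [descents, insertPeak, (hM a (by simp)).not_gt, hM b (by simp)]
  | a :: b :: t, j + 2, _, hj, hM => by
    have ih := descents_insertIdx_of_forall_lt (b :: t) (j + 1) (by simp)
      (by simpa using hj) (fun x hx => hM x (by simp [hx]))
    simp only [insertIdx_succ_cons] at ih ⊢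
    simp [descents, insertPeak, ih]
  | [_], j + 2, _, hj, _ => by simp at hj

/-- Stated for an arbitrary weight `f` so that the induction can absorb the change contributed by
the first letter into `f`. -/
theorem sum_numChanges_insertPeak (t : List Bool) : ∀ (b : Bool) (f : ℕ → ℤ),
    ∑ j ∈ Finset.range (t.length + 3), f (insertPeak (b :: t) j).numChanges
      = ((b :: t).numChanges + 1) * f (b :: t).numChanges
        + 2 * f ((b :: t).numChanges + 1)
        + (t.length - (b :: t).numChanges) * f ((b :: t).numChanges + 2) := by
  induction t with
  | nil =>
    intro b f
    cases b <;>
      simp only [length_nil, zero_add, Finset.sum_range_succ, Finset.range_one,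
        Finset.sum_singleton, insertPeak, numChanges, ↓reduceIte, add_zero, Bool.false_eq_true,
        Bool.true_eq_false, CharP.cast_eq_zero, one_mul, sub_self, zero_mul] <;>
      ring
  | cons c e ih =>
    intro b f
    have ih' := ih c (fun x => f (x + if b = c then 0 else 1))
    rw [Finset.sum_range_succ', Finset.sum_range_succ'] at ih'
    rw [length_cons, Finset.sum_range_succ', Finset.sum_range_succ', Finset.sum_range_succ']
    have hshift : ∀ j, (insertPeak (b :: c :: e) (j + 1 + 1 + 1)).numChanges
        = (insertPeak (c :: e) (j + 1 + 1)).numChanges + if b = c then 0 else 1 :=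
      fun j => Nat.add_comm _ _
    simp only [hshift]
    cases b <;> cases c <;>
      simp only [insertPeak, numChanges, ↓reduceIte, add_zero, zero_add, Bool.false_eq_true,
        Bool.true_eq_false, Nat.cast_add, Nat.cast_one] at ih' ⊢ <;>
      ring_nf at ih' ⊢ <;> linear_combination ih'

theorem ofFn_insertNth {m : ℕ} (j : Fin (m + 1)) (x : α) (g : Fin m → α) :
    ofFn (j.insertNth x g) = (ofFn g).insertIdx j x := by
  refine ext_getElem (by simp [length_insertIdx, Nat.lt_succ_iff.mp j.isLt]) fun i h₁ h₂ => ?_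
  have hi : i < m + 1 := by simpa using h₁
  rw [List.getElem_ofFn, getElem_insertIdx]
  split_ifs with hlt heq
  · rw [Fin.insertNth_apply_below (α := fun _ => α) (i := j) (j := ⟨i, hi⟩) hlt]
    simp only [eq_rec_constant, List.getElem_ofFn]
    rfl
  · simp [heq]
  · rw [Fin.insertNth_apply_above (α := fun _ => α) (i := j) (j := ⟨i, hi⟩)
      (show (j : ℕ) < i by omega)]
    simp only [eq_rec_constant, List.getElem_ofFn]
    rfl

end List

theorem peak_or_valley_iff {α : Type*} [LinearOrder α] {a b c : α} (hab : a ≠ b)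
    (hbc : b ≠ c) :
    (a < b ∧ c < b ∨ b < a ∧ b < c) ↔ decide (b < a) ≠ decide (c < b) := by
  simp only [ne_eq, decide_eq_decide]
  rcases hab.lt_or_gt with h | h <;> rcases hbc.lt_or_gt with h' | h' <;>
    simp [h, h', h.not_gt, h'.not_gt]

theorem pval_injOn {n : ℕ} (π : Equiv.Perm (Fin n)) : Set.InjOn (pval π) (Set.Iio n) := by
  intro a ha b hb h
  simp only [Set.mem_Iio] at ha hb
  have := π.injective (Fin.ext (by simpa [pval, ha, hb] using h))
  simpa using congrArg Fin.val this

theorem descents_ofFn_perm {n : ℕ} (π : Equiv.Perm (Fin n)) :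
    (List.ofFn π).descents =
      List.ofFn fun i : Fin (n - 1) => decide (pval π (i + 1) < pval π i) := by
  rw [← List.descents_ofFn n (pval π),
    ← List.descents_map_of_strictMono (f := fun x : Fin n => (x : ℕ) + 1)
      fun _ _ h => by simpa,
    List.map_ofFn]
  congr with i
  simp [pval]

theorem dirChanges_eq_numChanges_descents {n : ℕ} (π : Equiv.Perm (Fin n)) :
    dirChanges π = (List.ofFn π).descents.numChanges := by
  rw [descents_ofFn_perm,
    List.numChanges_ofFn (n - 1) fun i => decide (pval π (i + 1) < pval π i), dirChanges,
    card_filter, card_filter, ← Ico_add_one_left_eq_Ioo, sum_Ico_eq_sum_range]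
  refine sum_congr rfl fun i hi => ?_
  rw [Finset.mem_range] at hi
  rw [show 0 + 1 + i - 1 = i by omega, show 0 + 1 + i = i + 1 by omega]
  have hne : ∀ a b, a < n → b < n → a ≠ b → pval π a ≠ pval π b :=
    fun a b ha hb => (pval_injOn π).ne ha hb
  exact if_congr (peak_or_valley_iff (hne _ _ (by omega) (by omega) (by omega))
    (hne _ _ (by omega) (by omega) (by omega))) rfl rfl

theorem altRuns_eq_numChanges_descents {n : ℕ} (hn : 2 ≤ n) (π : Equiv.Perm (Fin n)) :
    altRuns π = (List.ofFn π).descents.numChanges + 1 := by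
  rw [altRuns, if_neg (by omega), dirChanges_eq_numChanges_descents]

def insertMax {m : ℕ} (j : Fin (m + 1)) (σ : Equiv.Perm (Fin m)) : Equiv.Perm (Fin (m + 1)) :=
  (finSuccEquiv' j).trans ((Equiv.optionCongr σ).trans (finSuccEquiv' (Fin.last m)).symm)

theorem coe_insertMax {m : ℕ} (j : Fin (m + 1)) (σ : Equiv.Perm (Fin m)) :
    ⇑(insertMax j σ) = j.insertNth (Fin.last m) (Fin.castSucc ∘ σ) := by
  funext i
  induction i using j.succAboveCases <;> simp [insertMax]

theorem insertMax_bijective (m : ℕ) :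
    Function.Bijective fun p : Fin (m + 1) × Equiv.Perm (Fin m) => insertMax p.1 p.2 := by
  refine (Fintype.bijective_iff_injective_and_card _).mpr
    ⟨?_, by simp [Fintype.card_perm, Nat.factorial_succ]⟩
  rintro ⟨j, σ⟩ ⟨j', σ'⟩ (h : insertMax j σ = insertMax j' σ')
  have hpos : ∀ j σ, (insertMax j σ).symm (Fin.last m) = j := fun j σ => by
    simp [Equiv.symm_apply_eq, coe_insertMax]
  obtain rfl : j = j' := by rw [← hpos j σ, ← hpos j' σ', h]
  have hσ := Fin.insertNth_right_injective _ ((coe_insertMax j σ).symm.trans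
    ((congrArg DFunLike.coe h).trans (coe_insertMax j σ')))
  rw [Prod.mk.injEq, Equiv.ext_iff]
  exact ⟨rfl, fun i => Fin.castSucc_injective _ (congrFun hσ i)⟩

theorem descents_ofFn_insertMax {m : ℕ} (hm : m ≠ 0) (j : Fin (m + 1))
    (σ : Equiv.Perm (Fin m)) :
    (List.ofFn (insertMax j σ)).descents = (List.ofFn σ).descents.insertPeak j := by
  rw [coe_insertMax, List.ofFn_insertNth, ← List.map_ofFn,
    List.descents_insertIdx_of_forall_lt _ _ (by simpa using hm)
      (by simpa using Nat.lt_succ_iff.mp j.isLt) (by simp [Fin.castSucc_lt_last]),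
    List.descents_map_of_strictMono Fin.strictMono_castSucc]

theorem card_altRuns_insertMax {m : ℕ} (hm : 2 ≤ m) (σ : Equiv.Perm (Fin m)) (k : ℕ) :
    #{j | altRuns (insertMax j σ) = k}
      = (if altRuns σ = k then k else 0) + (if altRuns σ + 1 = k then 2 else 0)
        + (if altRuns σ + 2 = k then m + 1 - k else 0) := by
  obtain ⟨b, t, hd⟩ : ∃ b t, (List.ofFn σ).descents = b :: t :=
    List.exists_cons_of_ne_nil <| by
      rw [← List.length_pos_iff, List.length_descents, List.length_ofFn]; omega
  have ht : t.length + 3 = m + 1 := by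
    have := List.length_descents (List.ofFn σ)
    simp only [hd, List.length_cons, List.length_ofFn] at this
    omega
  have hle := (b :: t).numChanges_le_length_sub_one
  have hσ := altRuns_eq_numChanges_descents hm σ
  rw [hd] at hσ
  have hcount : (#{j | altRuns (insertMax j σ) = k} : ℤ)
      = ∑ j ∈ range (t.length + 3),
          if (List.insertPeak (b :: t) j).numChanges + 1 = k then 1 else 0 := by
    rw [card_filter, Nat.cast_sum, ht, ← Fin.sum_univ_eq_sum_range]
    refine sum_congr rfl fun j _ => ?_
    rw [altRuns_eq_numChanges_descents (by omega), descents_ofFn_insertMax (by omega), hd]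
    simp
  have := hcount.trans (List.sum_numChanges_insertPeak t b fun c => if c + 1 = k then 1 else 0)
  simp only [List.length_cons, Nat.add_sub_cancel] at hle
  split_ifs at this ⊢ <;> omega

theorem sum_ite_altRuns_add_eq {m : ℕ} (c i k : ℕ) :
    ∑ σ : Equiv.Perm (Fin m), (if altRuns σ + i = k then c else 0)
      = c * if i ≤ k then runNum m (k - i) else 0 := by
  rw [← sum_filter, sum_const, smul_eq_mul, mul_comm, runNum]
  split_ifs with hik
  · congr 3 with σ
    omega
  · rw [filter_false_of_mem fun σ _ => by omega, card_empty, mul_zero]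

theorem runNum_succ {m k : ℕ} (hm : 2 ≤ m) (hk : 1 ≤ k) :
    runNum (m + 1) k = k * runNum m k + 2 * runNum m (k - 1)
      + (m + 1 - k) * (if 2 ≤ k then runNum m (k - 2) else 0) := by
  have hsplit :
      runNum (m + 1) k = ∑ σ : Equiv.Perm (Fin m), #{j | altRuns (insertMax j σ) = k} := by
    rw [runNum, card_filter, ← Fintype.sum_bijective _ (insertMax_bijective m) _ _ fun _ => rfl,
      Fintype.sum_prod_type_right]
    simp only [card_filter]
  simp only [hsplit, card_altRuns_insertMax hm, sum_add_distrib, sum_ite_altRuns_add_eq]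
  simpa [hk] using sum_ite_altRuns_add_eq (m := m) k 0 k

theorem runNum_one (k : ℕ) : runNum 1 k = if k = 0 then 1 else 0 := by
  have h : ∀ π : Equiv.Perm (Fin 1), altRuns π = 0 := by decide
  split_ifs with hk <;> simp [runNum, h, hk, eq_comm]

theorem runNum_two (k : ℕ) : runNum 2 k = if k = 1 then 2 else 0 := by
  have h : ∀ π : Equiv.Perm (Fin 2), altRuns π = 1 := by decide
  split_ifs with hk <;> simp [runNum, h, hk, eq_comm, Fintype.card_perm]

/-- The numbers `R(n,k)` of permutations of `[n]` with `k` alternating runs satisfy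
André's recurrence, with initial values `R(1,0) = 1` and `R(1,k) = 0` for `k ≥ 1`. -/
theorem stmt0 :
    runNum 1 0 = 1 ∧ (∀ k, 1 ≤ k → runNum 1 k = 0) ∧
    (∀ n k, 2 ≤ n → 1 ≤ k →
      runNum n k = k * runNum (n-1) k + 2 * runNum (n-1) (k-1)
        + (n - k) * (if 2 ≤ k then runNum (n-1) (k-2) else 0)) := by
  refine ⟨runNum_one 0, fun k hk => by simp [runNum_one, Nat.one_le_iff_ne_zero.mp hk], ?_⟩
  intro n k hn hk
  obtain rfl | hn := hn.eq_or_lt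
  · simp only [Nat.reduceSub, runNum_two, runNum_one]
    split_ifs <;> omega
  · obtain ⟨m, rfl⟩ : ∃ m, n = m + 1 := ⟨n - 1, by omega⟩
    exact runNum_succ (by omega) hk
end

section
/- Define W_n(x) by W_1(x) = 1 and W_{n+1}(x) = (nx - x + 2)·W_n(x) + 2x(1-x)·W'_n(x), and define P_n(x) by P_0(x) = x and P_{n+1}(x) = (1+x²)·P'_n(x). Then for n ≥ 2, as an identity of functions for x > 1: W_n(x) = (1/x)·(x-1)^{(n+1)/2}·P_n(1/√(x-1)). -/
/-!
Put `r = √(x - 1)`, so that `x = 1 + r²` and `dr/dx = 1/(2r)`. The function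
`F_n(x) = x⁻¹ r^(n+1) P_n(r⁻¹)` satisfies the recurrence of `W_n` on `(1, ∞)` as soon as
`P_{n+1} = (1 + X²) P_n'`: differentiating `F_n` by the chain rule, the factor `1 + r⁻²` produced
by `d(r⁻¹)/dx` is exactly `x / r²`. Since `F_1 = W_1 = 1`, and `W_n'` agrees with `F_n'` on
`(1, ∞)` once `W_n` agrees with `F_n` there, induction on `n` gives `W_n = F_n` on `(1, ∞)`.
-/

open Polynomial

noncomputable def sqrtSubOneForm (p : ℝ[X]) (k : ℕ) (x : ℝ) : ℝ :=
  x⁻¹ * √(x - 1) ^ (k + 1) * p.eval (√(x - 1))⁻¹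

lemma hasDerivAt_sqrt_sub_one {x : ℝ} (hx : 1 < x) :
    HasDerivAt (fun z => √(z - 1)) (1 / (2 * √(x - 1))) x := by
  simpa using ((hasDerivAt_id x).sub_const 1).sqrt (sub_pos.mpr hx).ne'

lemma hasDerivAt_sqrtSubOneForm (p : ℝ[X]) (k : ℕ) {x : ℝ} (hx : 1 < x) :
    HasDerivAt (sqrtSubOneForm p k)
      ((-(x ^ 2)⁻¹ * √(x - 1) ^ (k + 1)
          + x⁻¹ * ((k + 1 : ℕ) * √(x - 1) ^ k * (1 / (2 * √(x - 1))))) * p.eval (√(x - 1))⁻¹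
        + x⁻¹ * √(x - 1) ^ (k + 1)
          * ((derivative p).eval (√(x - 1))⁻¹ * (-(1 / (2 * √(x - 1))) / √(x - 1) ^ 2))) x := by
  have hr : √(x - 1) ≠ 0 := (Real.sqrt_pos.mpr (by linarith)).ne'
  have hsqrt := hasDerivAt_sqrt_sub_one hx
  exact ((hasDerivAt_inv (by positivity)).mul (hsqrt.pow (k + 1))).mul
    ((p.hasDerivAt _).comp x (hsqrt.inv hr))

lemma sqrtSubOneForm_one_add_sq {x : ℝ} (hx : 1 < x) : sqrtSubOneForm (1 + X ^ 2) 1 x = 1 := by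
  have hx1 : 0 < x - 1 := sub_pos.mpr hx
  simp only [sqrtSubOneForm, eval_add, eval_one, eval_pow, eval_X, inv_pow,
    Real.sq_sqrt hx1.le]
  field_simp
  ring

lemma sqrtSubOneForm_derivative_step (p : ℝ[X]) (k : ℕ) {x : ℝ} (hx : 1 < x) :
    sqrtSubOneForm ((1 + X ^ 2) * derivative p) (k + 1) x =
      ((k : ℝ) * x - x + 2) * sqrtSubOneForm p k x
        + 2 * x * (1 - x) * deriv (sqrtSubOneForm p k) x := by
  rw [(hasDerivAt_sqrtSubOneForm p k hx).deriv, sqrtSubOneForm, sqrtSubOneForm]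
  have hr : 0 < √(x - 1) := Real.sqrt_pos.mpr (by linarith)
  have hx_eq : x = √(x - 1) ^ 2 + 1 := by rw [Real.sq_sqrt (by linarith)]; ring
  simp only [eval_mul, eval_add, eval_one, eval_pow, eval_X]
  generalize √(x - 1) = r at hr hx_eq ⊢
  subst hx_eq
  field_simp
  push_cast
  ring

lemma rpow_natCast_div_two {a : ℝ} (ha : 0 ≤ a) (m : ℕ) : a ^ ((m : ℝ) / 2) = √a ^ m := by
  rw [Real.sqrt_eq_rpow, ← Real.rpow_mul_natCast ha, one_div_mul_eq_div]

/-- For `n ≥ 2` and `x > 1`: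
`W_n(x) = (1/x)·(x-1)^{(n+1)/2}·P_n(1/√(x-1))`. -/
theorem stmt4 (W : ℕ → Polynomial ℝ) (hW1 : W 1 = 1)
    (hWrec : ∀ n : ℕ, 1 ≤ n → W (n+1) =
      ((n : Polynomial ℝ) * X - X + 2) * W n + 2 * X * (1 - X) * derivative (W n))
    (P : ℕ → Polynomial ℝ) (hP0 : P 0 = X)
    (hPrec : ∀ n : ℕ, P (n+1) = (1 + X^2) * derivative (P n)) :
    ∀ n : ℕ, 2 ≤ n → ∀ x : ℝ, 1 < x →
      (W n).eval x = (1/x) * (x - 1) ^ (((n : ℝ) + 1)/2)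
        * (P n).eval (1 / Real.sqrt (x - 1)) := by
  have hW : ∀ n, 1 ≤ n → Set.EqOn (W n).eval (sqrtSubOneForm (P n) n) (Set.Ioi 1) := by
    intro n hn
    induction n, hn using Nat.le_induction with
    | base =>
      intro x hx
      rw [hW1, hPrec 0, hP0, derivative_X, mul_one, sqrtSubOneForm_one_add_sq hx]
      exact eval_one
    | succ k hk ih =>
      intro x hx
      have hderiv : (derivative (W k)).eval x = deriv (sqrtSubOneForm (P k) k) x := by
        rw [← Polynomial.deriv, ih.deriv isOpen_Ioi hx]
      rw [hWrec k hk, hPrec k, sqrtSubOneForm_derivative_step _ _ hx, ← hderiv, ← ih hx]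
      simp
  intro n hn x hx
  rw [show (W n).eval x = _ from hW n (by omega) hx, sqrtSubOneForm, ← Nat.cast_succ,
    rpow_natCast_div_two (sub_pos.mpr hx).le, one_div, one_div]
end

section
/- Define R_n(x) by R_1(x) = 1 and R_{n+2}(x) = x(nx+2)·R_{n+1}(x) + x(1-x²)·R'_{n+1}(x), and P_n(x) by P_0(x) = x, P_{n+1}(x) = (1+x²)·P'_n(x). Then for n ≥ 2 and x > 1: R_n(x) = ((x+1)/2)^{n-1}·((x-1)/(x+1))^{(n+1)/2}·P_n(√((x+1)/(x-1))). -/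
open Polynomial

/-! With `x = (t² + 1)/(t² - 1)`, i.e. `t = √((x + 1)/(x - 1))`, one has `(1 - x²) d/dx = t d/dt`,
so the term `x(1 - x²)R'_{n+1}(x)` of the recurrence becomes `x t d/dt`. Writing
`R_{n+2}(x) = (t²/(t² - 1))^{n+1} P_{n+2}(t) / t^{n+3}` and differentiating in `t`, the recurrence
for `R` becomes `P_{n+3} = (1 + t²) P'_{n+2}`, so the identity holds by induction on `n`. It is the
stated one because `(x + 1)/2 = t²/(t² - 1)` and `(x - 1)/(x + 1) = t⁻²`. -/

/-- The inverse of `x ↦ √((x + 1)/(x - 1))` on `(1, ∞)`. -/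
noncomputable def sqrtRatioInv (t : ℝ) : ℝ := (t ^ 2 + 1) / (t ^ 2 - 1)

lemma hasDerivAt_sqrtRatioInv {t : ℝ} (ht : t ^ 2 - 1 ≠ 0) :
    HasDerivAt sqrtRatioInv (-4 * t / (t ^ 2 - 1) ^ 2) t := by
  refine (((hasDerivAt_pow 2 t).add_const 1).div ((hasDerivAt_pow 2 t).sub_const 1) ht).congr_deriv ?_
  ring

lemma hasDerivAt_eval_sqrtRatioInv (p : ℝ[X]) {t : ℝ} (ht0 : t ≠ 0) (ht : t ^ 2 - 1 ≠ 0) :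
    HasDerivAt (fun s ↦ p.eval (sqrtRatioInv s))
      ((1 - sqrtRatioInv t ^ 2) * (derivative p).eval (sqrtRatioInv t) / t) t := by
  refine ((p.hasDerivAt _).comp t (hasDerivAt_sqrtRatioInv ht)).congr_deriv ?_
  unfold sqrtRatioInv
  field_simp
  ring

lemma one_lt_sqrt_add_one_div_sub_one {x : ℝ} (hx : 1 < x) : 1 < √((x + 1) / (x - 1)) := by
  rw [Real.lt_sqrt zero_le_one, one_pow, lt_div_iff₀ (by linarith)]
  linarith

lemma sqrtRatioInv_sqrt {x : ℝ} (hx : 1 < x) : sqrtRatioInv √((x + 1) / (x - 1)) = x := by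
  have hx1 : x - 1 ≠ 0 := by linarith
  rw [sqrtRatioInv, Real.sq_sqrt (div_pos (by linarith) (by linarith)).le]
  field_simp
  ring

lemma sqrtRatioInv_add_one_div_two {t : ℝ} (ht : t ^ 2 - 1 ≠ 0) :
    (sqrtRatioInv t + 1) / 2 = t ^ 2 / (t ^ 2 - 1) := by
  unfold sqrtRatioInv
  field_simp
  ring

lemma sqrtRatioInv_sub_one_div_add_one {t : ℝ} (ht0 : t ≠ 0) (ht : t ^ 2 - 1 ≠ 0) :
    (sqrtRatioInv t - 1) / (sqrtRatioInv t + 1) = (t ^ 2)⁻¹ := by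
  unfold sqrtRatioInv
  field_simp
  ring

section
variable (R : ℕ → ℝ[X]) (hR1 : R 1 = 1)
    (hRrec : ∀ n : ℕ, R (n+2) =
      X * ((n : ℝ[X]) * X + 2) * R (n+1) + X * (1 - X^2) * derivative (R (n+1)))
    (P : ℕ → ℝ[X]) (hP0 : P 0 = X)
    (hPrec : ∀ n : ℕ, P (n+1) = (1 + X^2) * derivative (P n))
include hR1 hRrec hP0 hPrec

theorem eval_sqrtRatioInv (n : ℕ) {t : ℝ} (ht : 1 < t) :
    (R (n + 2)).eval (sqrtRatioInv t) =
      (t ^ 2 / (t ^ 2 - 1)) ^ (n + 1) * (P (n + 2)).eval t / t ^ (n + 3) := by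
  induction n generalizing t with
  | zero =>
    have ht1 : t ^ 2 - 1 ≠ 0 := by nlinarith
    simp only [hRrec 0, hR1, hPrec 1, hPrec 0, hP0, sqrtRatioInv, CharP.cast_eq_zero, zero_mul,
      zero_add, mul_one, mul_zero, add_zero, derivative_one, derivative_X,
      derivative_X_pow_succ, Nat.cast_one, map_add, map_one, pow_one, eval_mul, eval_X,
      eval_ofNat, eval_add, eval_one, eval_pow]
    field_simp
    ring
  | succ n ih =>
    have ht0 : t ≠ 0 := by positivity
    have ht1 : t ^ 2 - 1 ≠ 0 := by nlinarith
    have hF := ((((hasDerivAt_pow 2 t).div ((hasDerivAt_pow 2 t).sub_const 1) ht1).pow (n + 1)).mul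
      ((P (n + 2)).hasDerivAt t)).div (hasDerivAt_pow (n + 3) t) (pow_ne_zero _ ht0)
    have heq : (fun s ↦ (R (n + 2)).eval (sqrtRatioInv s)) =ᶠ[nhds t]
        fun s ↦ (s ^ 2 / (s ^ 2 - 1)) ^ (n + 1) * (P (n + 2)).eval s / s ^ (n + 3) :=
      Filter.eventually_of_mem (Ioi_mem_nhds ht) fun s hs ↦ ih hs
    have hR := (hasDerivAt_eval_sqrtRatioInv (R (n + 2)) ht0 ht1).unique
      (hF.congr_of_eventuallyEq heq)
    rw [div_eq_iff ht0] at hR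
    rw [hRrec (n + 1), hPrec (n + 2)]
    simp only [eval_add, eval_mul, eval_X, eval_ofNat, eval_one, eval_sub, eval_pow, eval_natCast]
    rw [ih ht]
    linear_combination (norm := skip) sqrtRatioInv t * hR
    simp only [sqrtRatioInv, Pi.div_apply, Pi.pow_apply, Pi.mul_apply, Nat.add_sub_cancel, div_pow]
    push_cast
    field_simp
    ring
end

/-- For `n ≥ 2` and `x > 1`:
`R_n(x) = ((x+1)/2)^{n-1}·((x-1)/(x+1))^{(n+1)/2}·P_n(√((x+1)/(x-1)))`. -/
theorem stmt5 (R : ℕ → Polynomial ℝ) (hR1 : R 1 = 1)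
    (hRrec : ∀ n : ℕ, R (n+2) =
      X * ((n : Polynomial ℝ) * X + 2) * R (n+1) + X * (1 - X^2) * derivative (R (n+1)))
    (P : ℕ → Polynomial ℝ) (hP0 : P 0 = X)
    (hPrec : ∀ n : ℕ, P (n+1) = (1 + X^2) * derivative (P n)) :
    ∀ n : ℕ, 2 ≤ n → ∀ x : ℝ, 1 < x →
      (R n).eval x = ((x + 1)/2) ^ (n - 1) * ((x - 1)/(x + 1)) ^ (((n : ℝ) + 1)/2)
        * (P n).eval (Real.sqrt ((x + 1)/(x - 1))) := by
  intro n hn x hx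
  obtain ⟨k, rfl⟩ : ∃ k, n = k + 2 := ⟨n - 2, by omega⟩
  have ht := one_lt_sqrt_add_one_div_sub_one hx
  have hxt := sqrtRatioInv_sqrt hx
  generalize √((x + 1) / (x - 1)) = t at ht hxt ⊢
  subst hxt
  have ht0 : 0 < t := by positivity
  have ht1 : t ^ 2 - 1 ≠ 0 := by nlinarith
  have hpow : ((t ^ 2)⁻¹ : ℝ) ^ ((((k + 2 : ℕ) : ℝ) + 1) / 2) = (t ^ (k + 3))⁻¹ := by
    rw [Real.inv_rpow (by positivity), ← Real.rpow_natCast_mul ht0.le,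
      show ((2 : ℕ) : ℝ) * ((((k + 2 : ℕ) : ℝ) + 1) / 2) = ((k + 3 : ℕ) : ℝ) by push_cast; ring,
      Real.rpow_natCast]
  rw [eval_sqrtRatioInv R hR1 hRrec P hP0 hPrec k ht, sqrtRatioInv_add_one_div_two ht1,
    sqrtRatioInv_sub_one_div_add_one ht0.ne' ht1, hpow, show k + 2 - 1 = k + 1 from rfl]
  ring
end

section
/- Define R_n(x) by R_1(x) = 1, R_{n+2}(x) = x(nx+2)·R_{n+1}(x) + x(1-x²)·R'_{n+1}(x), and W_n(x) by W_1(x) = 1, W_{n+1}(x) = (nx - x + 2)·W_n(x) + 2x(1-x)·W'_n(x). Then for all n ≥ 2: R_n(x) = (x·(1+x)^{n-2} / 2^{n-2}) · W_n(2x/(1+x)), as an identity of rational functions (equivalently, 2^{n-2}·R_n(x) = x·(1+x)^{n-2}·W_n(2x/(1+x)) for all x ≠ -1). -/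
/-!
Substituting `t = 2x/(1+x)` turns the peak recurrence into the runs recurrence: if
`f(x) = x (1+x)^m P(t)`, then the runs operator `x((m+1)x+2) f + x(1-x²) f'` equals
`x (1+x)^(m+1) Q(t) / 2`, where `Q = ((m+1)t+2) P + 2t(1-t) P'` is the peak operator applied to
`P`. Since `R_{m+2}` agrees with `f / 2^m` on the open set `x ≠ -1`, their derivatives agree
there too, and induction on `m` gives the identity.
-/

open Polynomial

noncomputable def peakSubst (m : ℕ) (P : ℝ[X]) (x : ℝ) : ℝ :=
  x * (1 + x) ^ m * P.eval (2 * x / (1 + x))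

lemma hasDerivAt_two_mul_div_one_add {x : ℝ} (hx : 1 + x ≠ 0) :
    HasDerivAt (fun y : ℝ => 2 * y / (1 + y)) (2 / (1 + x) ^ 2) x := by
  have hnum : HasDerivAt (fun y : ℝ => 2 * y) 2 x := by
    simpa using (hasDerivAt_id x).const_mul (2 : ℝ)
  have hden : HasDerivAt (fun y : ℝ => 1 + y) 1 x := by
    simpa using (hasDerivAt_id x).const_add (1 : ℝ)
  exact (hnum.div hden hx).congr_deriv (by ring)

lemma natCast_mul_pow_pred_mul_self (m : ℕ) (a : ℝ) : m * a ^ (m - 1) * a = m * a ^ m := by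
  cases m <;> simp [pow_succ, mul_assoc]

lemma hasDerivAt_peakSubst (m : ℕ) (P : ℝ[X]) {x : ℝ} (hx : 1 + x ≠ 0) :
    HasDerivAt (peakSubst m P)
      ((1 + x) ^ m * (1 + m * x / (1 + x)) * P.eval (2 * x / (1 + x))
        + 2 * x * (1 + x) ^ m / (1 + x) ^ 2 * (derivative P).eval (2 * x / (1 + x))) x := by
  have h : HasDerivAt (fun y => y * (1 + y) ^ m * P.eval (2 * y / (1 + y)))
      ((1 * (1 + x) ^ m + x * (m * (1 + x) ^ (m - 1) * 1)) * P.eval (2 * x / (1 + x))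
        + x * (1 + x) ^ m * ((derivative P).eval (2 * x / (1 + x)) * (2 / (1 + x) ^ 2))) x :=
    ((hasDerivAt_id' x).mul (((hasDerivAt_id' x).const_add 1).pow m)).mul
      ((P.hasDerivAt _).comp x (hasDerivAt_two_mul_div_one_add hx))
  refine h.congr_deriv ?_
  have hpow := natCast_mul_pow_pred_mul_self m (1 + x)
  generalize eval (2 * x / (1 + x)) P = p
  generalize eval (2 * x / (1 + x)) (derivative P) = q
  field_simp
  linear_combination x * (1 + x) * p * hpow

lemma runs_step_of_peakSubst (m : ℕ) (R P : ℝ[X])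
    (h : ∀ y : ℝ, y ≠ -1 → 2 ^ m * R.eval y = peakSubst m P y) {x : ℝ} (hx : x ≠ -1) :
    2 ^ (m + 1) * (X * (((m + 1 : ℕ) : ℝ[X]) * X + 2) * R
        + X * (1 - X ^ 2) * derivative R).eval x
      = peakSubst (m + 1) ((((m + 2 : ℕ) : ℝ[X]) * X - X + 2) * P
          + 2 * X * (1 - X) * derivative P) x := by
  have hx' : 1 + x ≠ 0 := fun h0 => hx (by linarith)
  have hR : R.eval x = peakSubst m P x / 2 ^ m := by
    rw [← h x hx]; field_simp
  have hR_near : (fun y => R.eval y) =ᶠ[nhds x] fun y => peakSubst m P y / 2 ^ m := by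
    filter_upwards [isOpen_compl_singleton.mem_nhds hx] with y hy
    rw [← h y hy]; field_simp
  have hR' := (R.hasDerivAt x).unique
    (((hasDerivAt_peakSubst m P hx').div_const (2 ^ m)).congr_of_eventuallyEq hR_near)
  simp only [eval_add, eval_mul, eval_sub, eval_pow, eval_X, eval_ofNat, eval_natCast,
    eval_one, hR, hR', peakSubst]
  generalize eval (2 * x / (1 + x)) P = p
  generalize eval (2 * x / (1 + x)) (derivative P) = q
  push_cast
  field_simp
  ring

/-- For `n ≥ 2` and all `x ≠ -1`:
`2^{n-2}·R_n(x) = x·(1+x)^{n-2}·W_n(2x/(1+x))`. -/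
theorem stmt6 (R : ℕ → Polynomial ℝ) (hR1 : R 1 = 1)
    (hRrec : ∀ n : ℕ, R (n+2) =
      X * ((n : Polynomial ℝ) * X + 2) * R (n+1) + X * (1 - X^2) * derivative (R (n+1)))
    (W : ℕ → Polynomial ℝ) (hW1 : W 1 = 1)
    (hWrec : ∀ n : ℕ, 1 ≤ n → W (n+1) =
      ((n : Polynomial ℝ) * X - X + 2) * W n + 2 * X * (1 - X) * derivative (W n)) :
    ∀ n : ℕ, 2 ≤ n → ∀ x : ℝ, x ≠ -1 →
      2 ^ (n - 2) * (R n).eval x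
        = x * (1 + x) ^ (n - 2) * (W n).eval (2 * x / (1 + x)) := by
  suffices key : ∀ m : ℕ, ∀ x : ℝ, x ≠ -1 →
      2 ^ m * (R (m + 2)).eval x = peakSubst m (W (m + 2)) x by
    intro n hn x hx
    obtain ⟨m, rfl⟩ : ∃ m, n = m + 2 := ⟨n - 2, by omega⟩
    simpa [peakSubst] using key m x hx
  intro m
  induction m with
  | zero =>
    intro x _
    simp [peakSubst, hRrec 0, hWrec 1 le_rfl, hR1, hW1, mul_comm]
  | succ m ih =>
    intro x hx
    rw [hRrec (m + 1), hWrec (m + 2) (by omega)]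
    exact runs_step_of_peakSubst m _ _ ih hx
end

section
/- Let T_n(x) = Σ_{k=1}^n a_k(n)·x^k where a_k(n) is the number of permutations of [n] whose longest alternating subsequence has length k, and let R_n(x) = Σ_{k=1}^{n-1} R(n,k)·x^k where R(n,k) is the number of permutations of [n] with k alternating runs. Then for all n ≥ 2: T_n(x) = (1/2)·(1+x)·R_n(x). -/
open Finset Polynomial

/-- `altOK d l` : the list `l` is alternating, starting with a descent iff `d = true`. -/
def altOK : Bool → List ℕ → Bool
  | _, [] => true
  | _, [_] => true
  | d, a :: b :: t => (if d then decide (b < a) else decide (a < b)) && altOK (!d) (b :: t)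

/-- length of the longest alternating (down-up-down-…) subsequence of a list -/
def las (l : List ℕ) : ℕ :=
  ((l.sublists.filter (altOK true)).map List.length).foldr max 0

/-- `a_k(n)` (written `anum n k`): the number of permutations of `[n]` whose longest
alternating subsequence has length `k`. -/
def anum (n k : ℕ) : ℕ :=
  (Finset.univ.filter (fun π : Equiv.Perm (Fin n) =>
    las (List.ofFn (fun i : Fin n => pval π (i : ℕ))) = k)).card

/-! In a sequence of distinct numbers, a longest alternating subsequence starting with a descent
can be chosen greedily: its first entry if the sequence starts with a descent, then one peak or
valley at every change of direction, then the last entry. So for a permutation `π` with `r`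
alternating runs, `las π = r + [π(1) > π(2)]`. The complement `π ↦ n + 1 - π` keeps the
direction changes and swaps an initial descent with an initial ascent, so `π` and its complement
contribute `x ^ r + x ^ (r + 1) = (1 + x) x ^ r` together, and summing over all `π` gives
`2 T_n(x) = (1 + x) R_n(x)`. -/

def AltStep (d : Bool) (a b : ℕ) : Prop := if d then b < a else a < b

instance (d : Bool) : DecidableRel (AltStep d) := fun a b => by unfold AltStep; infer_instance

def IsTurn (a b c : ℕ) : Prop := (a < b ∧ c < b) ∨ (b < a ∧ b < c)

instance (a b c : ℕ) : Decidable (IsTurn a b c) := by unfold IsTurn; infer_instance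

section AltStep

variable {d : Bool} {a b c : ℕ}

@[simp] lemma altStep_true : AltStep true a b ↔ b < a := Iff.rfl

@[simp] lemma altStep_false : AltStep false a b ↔ a < b := Iff.rfl

lemma altStep_not_iff : AltStep (!d) a b ↔ AltStep d b a := by cases d <;> rfl

lemma AltStep.ne (h : AltStep d a b) : a ≠ b := by
  cases d <;> simp only [altStep_true, altStep_false] at h <;> omega

lemma AltStep.asymm (h : AltStep d a b) : ¬AltStep d b a := by
  cases d <;> simp only [altStep_true, altStep_false] at * <;> omega

lemma AltStep.trans (hab : AltStep d a b) (hbc : AltStep d b c) : AltStep d a c := by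
  cases d <;> simp only [altStep_true, altStep_false] at * <;> omega

lemma altStep_or_altStep_of_ne (h : a ≠ b) : AltStep d a b ∨ AltStep d b a := by
  cases d <;> simp only [altStep_true, altStep_false] <;> omega

lemma isTurn_iff_of_altStep (hab : AltStep d a b) : IsTurn a b c ↔ AltStep (!d) b c := by
  cases d <;>
    simp only [altStep_true, altStep_false, Bool.not_true, Bool.not_false, IsTurn] at * <;> omega

end AltStep

lemma altOK_cons_cons_iff {d : Bool} {a b : ℕ} {t : List ℕ} :
    altOK d (a :: b :: t) = true ↔ AltStep d a b ∧ altOK (!d) (b :: t) = true := by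
  cases d <;> simp [altOK, AltStep]

lemma altOK_of_altOK_cons {d : Bool} {a : ℕ} {t : List ℕ} (h : altOK d (a :: t) = true) :
    altOK (!d) t = true := by
  cases t with
  | nil => cases d <;> rfl
  | cons b t => exact (altOK_cons_cons_iff.1 h).2

def lasFrom (d : Bool) (l : List ℕ) : ℕ :=
  ((l.sublists.filter (altOK d)).map List.length).foldr max 0

lemma las_eq_lasFrom (l : List ℕ) : las l = lasFrom true l := rfl

section lasFrom

variable {d : Bool} {a b : ℕ} {s l t : List ℕ}

lemma le_lasFrom (hs : s.Sublist l) (h : altOK d s = true) : s.length ≤ lasFrom d l :=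
  List.le_max_of_le (List.mem_map_of_mem (List.mem_filter.2 ⟨List.mem_sublists.2 hs, h⟩)) le_rfl

lemma lasFrom_le {m : ℕ} (h : ∀ s, s.Sublist l → altOK d s = true → s.length ≤ m) :
    lasFrom d l ≤ m := by
  refine List.max_le_of_forall_le _ _ fun k hk => ?_
  obtain ⟨s, hs, rfl⟩ := List.mem_map.1 hk
  obtain ⟨hsub, hok⟩ := List.mem_filter.1 hs
  exact h s (List.mem_sublists.1 hsub) hok

lemma lasFrom_mono (h : s.Sublist l) : lasFrom d s ≤ lasFrom d l :=
  lasFrom_le fun _ hs hok => le_lasFrom (hs.trans h) hok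

lemma one_le_lasFrom_cons : 1 ≤ lasFrom d (a :: l) := by
  cases d <;> exact le_lasFrom (List.singleton_sublist.2 List.mem_cons_self) rfl

lemma lasFrom_singleton : lasFrom d [a] = 1 :=
  le_antisymm (lasFrom_le fun _ hs _ => hs.length_le) one_le_lasFrom_cons

lemma lasFrom_cons_cons_of_altStep (hab : AltStep d a b) (ha : a ∉ b :: t) :
    lasFrom d (a :: b :: t) = lasFrom (!d) (b :: t) + 1 := by
  apply le_antisymm
  · refine lasFrom_le fun s hs hok => ?_
    cases s with
    | nil => exact Nat.zero_le _
    | cons c rest => exact Nat.succ_le_succ (le_lasFrom hs.tail (altOK_of_altOK_cons hok))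
  · suffices h : ∀ s, s.Sublist (b :: t) → altOK (!d) s = true →
        s.length + 1 ≤ lasFrom d (a :: b :: t) by
      have := lasFrom_le fun s hs hok => Nat.le_sub_one_of_lt (h s hs hok)
      have : 1 ≤ lasFrom d (a :: b :: t) := one_le_lasFrom_cons
      omega
    rintro (_ | ⟨c, rest⟩) hs hok
    · exact one_le_lasFrom_cons
    have hne : a ≠ c := fun h => ha (h ▸ hs.subset List.mem_cons_self)
    rcases altStep_or_altStep_of_ne (d := d) hne with hac | hca
    · exact le_lasFrom (hs.cons_cons a) (altOK_cons_cons_iff.2 ⟨hac, hok⟩)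
    -- `b`, `a`, `c` are monotone, so replacing the head `c` of `s` by `a, b` keeps it alternating.
    have hcb : c ≠ b := fun h => (hab.trans (h ▸ hca)).ne rfl
    cases rest with
    | nil =>
      have hok' : altOK d [a, b] = true := altOK_cons_cons_iff.2 ⟨hab, by cases d <;> rfl⟩
      exact le_lasFrom (((List.nil_sublist t).cons_cons b).cons_cons a) hok'
    | cons e r =>
      obtain ⟨hce, hok⟩ := altOK_cons_cons_iff.1 hok
      have hbe : AltStep (!d) b e :=
        ((altStep_not_iff.2 hab).trans (altStep_not_iff.2 hca)).trans hce
      have hsub : (e :: r).Sublist t := (List.sublist_cons_self c _).trans (hs.of_cons_of_ne hcb)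
      exact le_lasFrom ((hsub.cons_cons b).cons_cons a)
        (altOK_cons_cons_iff.2 ⟨hab, altOK_cons_cons_iff.2 ⟨hbe, hok⟩⟩)

lemma lasFrom_cons_cons_of_altStep_not (hab : AltStep (!d) a b) :
    lasFrom d (a :: b :: t) = lasFrom d (b :: t) := by
  refine le_antisymm (lasFrom_le fun s hs hok => ?_) (lasFrom_mono (List.sublist_cons_self a _))
  rcases List.sublist_cons_iff.1 hs with hs | ⟨_ | ⟨c, r⟩, rfl, hrest⟩
  · exact le_lasFrom hs hok
  · exact one_le_lasFrom_cons
  obtain ⟨hac, hok⟩ := altOK_cons_cons_iff.1 hok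
  have hbc : AltStep d b c := (altStep_not_iff.1 hab).trans hac
  exact le_lasFrom (s := b :: c :: r) ((hrest.of_cons_of_ne hbc.ne.symm).cons_cons b)
    (altOK_cons_cons_iff.2 ⟨hbc, hok⟩)

end lasFrom

def turnCount : List ℕ → ℕ
  | a :: b :: c :: t => (if IsTurn a b c then 1 else 0) + turnCount (b :: c :: t)
  | _ => 0

lemma turnCount_eq_card (l : List ℕ) :
    turnCount l = #{i ∈ range (l.length - 2) |
      IsTurn (l.getD i 0) (l.getD (i + 1) 0) (l.getD (i + 2) 0)} := by
  match l with
  | [] | [_] | [_, _] => rfl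
  | a :: b :: c :: t =>
    rw [turnCount, turnCount_eq_card (b :: c :: t), card_filter, card_filter]
    simp only [List.length_cons, List.getD_cons_succ]
    rw [show t.length + 1 + 1 + 1 - 2 = t.length + 1 by omega,
      show t.length + 1 + 1 - 2 = t.length by omega, sum_range_succ', add_comm]
    rfl

lemma lasFrom_eq_turnCount_add (d : Bool) (t : List ℕ) (a b : ℕ) (hl : (a :: b :: t).Nodup) :
    lasFrom d (a :: b :: t) = turnCount (a :: b :: t) + 1 + if AltStep d a b then 1 else 0 := by
  induction t generalizing d a b with
  | nil =>
    have hab : a ≠ b := by simpa using hl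
    rcases altStep_or_altStep_of_ne (d := d) hab with h | h
    · rw [lasFrom_cons_cons_of_altStep h (by simpa using hab), lasFrom_singleton, if_pos h]
      rfl
    · rw [lasFrom_cons_cons_of_altStep_not (altStep_not_iff.2 h), lasFrom_singleton,
        if_neg h.asymm]
      rfl
  | cons c t ih =>
    have hab : a ≠ b := fun h => (List.nodup_cons.1 hl).1 (h ▸ List.mem_cons_self)
    rw [turnCount]
    rcases altStep_or_altStep_of_ne (d := d) hab with h | h
    · rw [lasFrom_cons_cons_of_altStep h (List.nodup_cons.1 hl).1, ih (!d) b c hl.of_cons,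
        if_pos h]
      simp only [isTurn_iff_of_altStep h]
      omega
    · have h' : AltStep (!d) a b := altStep_not_iff.2 h
      rw [lasFrom_cons_cons_of_altStep_not h', ih d b c hl.of_cons, if_neg h.asymm]
      simp only [isTurn_iff_of_altStep h', Bool.not_not]
      omega

lemma sum_card_filter_mul_pow {α R : Type*} [Fintype α] [CommSemiring R] (f : α → ℕ)
    {s : Finset ℕ} (hf : ∀ a, f a ∈ s) (x : R) :
    ∑ k ∈ s, (#{a | f a = k} : R) * x ^ k = ∑ a, x ^ f a := by
  rw [← sum_fiberwise_of_maps_to' (fun a _ => hf a) (fun k => x ^ k)]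
  simp only [sum_const, nsmul_eq_mul]

section Perm

variable {n : ℕ}

def oneLine (π : Equiv.Perm (Fin n)) : List ℕ := List.ofFn fun i : Fin n => pval π i

lemma length_oneLine (π : Equiv.Perm (Fin n)) : (oneLine π).length = n := List.length_ofFn

lemma getD_oneLine (π : Equiv.Perm (Fin n)) (i : ℕ) : (oneLine π).getD i 0 = pval π i := by
  by_cases h : i < n
  · simp [oneLine, pval, h]
  · rw [List.getD_eq_default _ _ ((length_oneLine π).symm ▸ not_lt.1 h)]
    simp [pval, h]

lemma nodup_oneLine (π : Equiv.Perm (Fin n)) : (oneLine π).Nodup :=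
  List.nodup_ofFn.2 fun i j h => π.injective (Fin.ext (by simpa [pval] using h))

lemma dirChanges_eq_turnCount (π : Equiv.Perm (Fin n)) :
    dirChanges π = turnCount (oneLine π) := by
  have hIoo : Ioo 0 (n - 1) = (range (n - 2)).map (addRightEmbedding 1) := by
    ext i
    simp only [mem_Ioo, mem_map, mem_range, addRightEmbedding_apply]
    constructor
    · exact fun h => ⟨i - 1, by omega, by omega⟩
    · rintro ⟨j, hj, rfl⟩; omega
  rw [turnCount_eq_card, length_oneLine, dirChanges, hIoo, filter_map, card_map]
  simp only [getD_oneLine]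
  rfl

lemma las_oneLine (hn : 2 ≤ n) (π : Equiv.Perm (Fin n)) :
    las (oneLine π) = dirChanges π + 1 + if pval π 1 < pval π 0 then 1 else 0 := by
  obtain ⟨m, rfl⟩ := Nat.exists_eq_add_of_le' hn
  have hπ : oneLine π = pval π 0 :: pval π 1 :: List.ofFn fun i : Fin m => pval π (i + 2) := by
    simp [oneLine, List.ofFn_succ]
  have := lasFrom_eq_turnCount_add true _ _ _ (hπ ▸ nodup_oneLine π)
  rw [← hπ, ← dirChanges_eq_turnCount] at this
  rw [las_eq_lasFrom, this]
  rfl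

lemma dirChanges_le (π : Equiv.Perm (Fin n)) : dirChanges π ≤ n - 2 :=
  (card_filter_le _ _).trans (Nat.card_Ioo 0 (n - 1)).le

lemma altRuns_eq (hn : 2 ≤ n) (π : Equiv.Perm (Fin n)) : altRuns π = dirChanges π + 1 :=
  if_neg (by omega)

lemma las_oneLine_mem_Icc (hn : 2 ≤ n) (π : Equiv.Perm (Fin n)) :
    las (oneLine π) ∈ Icc 1 n := by
  have := dirChanges_le π
  rw [mem_Icc, las_oneLine hn]
  split_ifs <;> omega

lemma altRuns_mem_Icc (hn : 2 ≤ n) (π : Equiv.Perm (Fin n)) : altRuns π ∈ Icc 1 (n - 1) := by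
  have := dirChanges_le π
  rw [mem_Icc, altRuns_eq hn]
  omega

lemma pval_trans_revPerm_lt_iff (π : Equiv.Perm (Fin n)) {i j : ℕ} (hi : i < n) (hj : j < n) :
    pval (π.trans Fin.revPerm) i < pval (π.trans Fin.revPerm) j ↔ pval π j < pval π i := by
  simp only [pval, dif_pos hi, dif_pos hj, Equiv.trans_apply, Fin.revPerm_apply, Fin.val_rev]
  omega

lemma dirChanges_trans_revPerm (π : Equiv.Perm (Fin n)) :
    dirChanges (π.trans Fin.revPerm) = dirChanges π := by
  refine congrArg card (filter_congr fun i hi => ?_)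
  have hi : 0 < i ∧ i < n - 1 := mem_Ioo.1 hi
  rw [pval_trans_revPerm_lt_iff π (by omega) (by omega),
    pval_trans_revPerm_lt_iff π (by omega) (by omega),
    pval_trans_revPerm_lt_iff π (by omega) (by omega),
    pval_trans_revPerm_lt_iff π (by omega) (by omega), or_comm]

lemma pow_las_add_pow_las_trans_revPerm {R : Type*} [CommSemiring R] (hn : 2 ≤ n)
    (π : Equiv.Perm (Fin n)) (x : R) :
    x ^ las (oneLine π) + x ^ las (oneLine (π.trans Fin.revPerm)) = (1 + x) * x ^ altRuns π := by
  have hrev := pval_trans_revPerm_lt_iff π (i := 1) (j := 0) (by omega) (by omega)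
  have hne : pval π 0 ≠ pval π 1 := by
    simp [pval, show 0 < n by omega, show 1 < n by omega, Fin.val_inj]
  rw [las_oneLine hn, las_oneLine hn, dirChanges_trans_revPerm, altRuns_eq hn]
  rcases lt_or_gt_of_ne hne with h | h
  · rw [if_neg h.asymm, if_pos (hrev.2 h)]
    ring
  · rw [if_pos h, if_neg (hrev.not.2 h.asymm)]
    ring

end Perm

/-- Bóna's identity `T_n(x) = (1/2)(1+x) R_n(x)` for `n ≥ 2`. -/
theorem stmt8 :
    ∀ n, 2 ≤ n →
      (∑ k ∈ Finset.Icc 1 n, (anum n k : Polynomial ℝ) * X^k)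
        = Polynomial.C (1/2 : ℝ) * (1 + X)
            * ∑ k ∈ Finset.Icc 1 (n-1), (runNum n k : Polynomial ℝ) * X^k := by
  intro n hn
  have hT : ∑ k ∈ Icc 1 n, (anum n k : ℝ[X]) * X ^ k = ∑ π, X ^ las (oneLine π) :=
    sum_card_filter_mul_pow (fun π => las (oneLine π)) (las_oneLine_mem_Icc hn) X
  have hR : ∑ k ∈ Icc 1 (n - 1), (runNum n k : ℝ[X]) * X ^ k = ∑ π, X ^ altRuns π :=
    sum_card_filter_mul_pow _ (altRuns_mem_Icc hn) X
  have hcompl : ∑ π : Equiv.Perm (Fin n), (X : ℝ[X]) ^ las (oneLine π) =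
      ∑ π : Equiv.Perm (Fin n), X ^ las (oneLine (π.trans Fin.revPerm)) :=
    (Equiv.sum_comp (Equiv.mulLeft Fin.revPerm) _).symm
  have h2 : 2 * ∑ π : Equiv.Perm (Fin n), (X : ℝ[X]) ^ las (oneLine π) =
      (1 + X) * ∑ π : Equiv.Perm (Fin n), X ^ altRuns π := by
    rw [two_mul]
    nth_rw 2 [hcompl]
    rw [← sum_add_distrib, mul_sum]
    exact sum_congr rfl fun π _ => pow_las_add_pow_las_trans_revPerm hn π X
  rw [hT, hR, mul_assoc, ← h2, ← mul_assoc, ← C_ofNat, ← C_mul]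
  norm_num
end

section
/- Define T_n(x) by T_0(x) = 1, T_1(x) = x, and T_{n+1}(x) = x(nx+1)·T_n(x) + x(1-x²)·T'_n(x). Then T_n(x) = Σ_{k=1}^n a_k(n)·x^k for n ≥ 1, where a_k(n) satisfies a_k(n) = k·a_k(n-1) + a_{k-1}(n-1) + (n-k+1)·a_{k-2}(n-1) with a_0(0) = a_1(1) = 1 and a_k(0) = a_0(n) = 0 for n,k ≥ 1. -/
/-!
Comparing coefficients of `xᵏ` on both sides of `T_{n+1} = x(nx+1) T_n + x(1-x²) T'_n` turns the
polynomial recurrence into exactly the recurrence defining `a_k(n)`. Hence the generating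
polynomial `∑ₖ a_k(n) xᵏ` satisfies the same recurrence and initial value as `T_n`, and the two
agree; for `n ≥ 1` the constant term `a_0(n)` vanishes.
-/

open Finset Polynomial

/-- `a_k(n)` (written `arec n k`), defined by the recurrence
`a_k(n) = k·a_k(n-1) + a_{k-1}(n-1) + (n-k+1)·a_{k-2}(n-1)` with
`a_0(0) = a_1(1) = 1` and `a_k(0) = a_0(n) = 0` for `n,k ≥ 1`
(terms with a negative index being zero). -/
def arec : ℕ → ℕ → ℕ
  | 0, 0 => 1
  | 0, _+1 => 0
  | _+1, 0 => 0
  | n+1, k+1 => (k+1) * arec n (k+1) + arec n k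
      + (n + 1 - k) * (if 1 ≤ k then arec n (k-1) else 0)

theorem arec_eq_zero_of_lt : ∀ {n k : ℕ}, n < k → arec n k = 0
  | 0, _ + 1, _ => rfl
  | n + 1, k + 1, h => by
    simp [arec, arec_eq_zero_of_lt (by omega : n < k + 1), arec_eq_zero_of_lt (by omega : n < k),
      Nat.sub_eq_zero_of_le (by omega : n + 1 ≤ k)]

theorem arec_succ_one (n : ℕ) : arec (n + 1) 1 = arec n 1 + arec n 0 := by
  simp [arec]

theorem arec_succ_add_two (n k : ℕ) :
    arec (n + 1) (k + 2) = (k + 2) * arec n (k + 2) + arec n (k + 1) + (n - k) * arec n k := by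
  simp [arec]

/-- The truncated subtraction `n - k` may be read in a ring, since `a_k(n) = 0` for `k > n`. -/
theorem cast_arec_succ_add_two {R : Type*} [CommRing R] (n k : ℕ) :
    (arec (n + 1) (k + 2) : R) =
      (k + 2) * arec n (k + 2) + arec n (k + 1) + ((n : R) - k) * arec n k := by
  rw [arec_succ_add_two]
  rcases le_or_gt k n with hk | hk
  · push_cast [Nat.cast_sub hk]
    ring
  · simp [arec_eq_zero_of_lt hk]

noncomputable def arecPoly {R : Type*} [Semiring R] (n : ℕ) : R[X] :=
  ∑ k ∈ range (n + 1), (arec n k : R[X]) * X ^ k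

theorem coeff_arecPoly {R : Type*} [Semiring R] (n k : ℕ) :
    (arecPoly n : R[X]).coeff k = arec n k := by
  simp only [arecPoly, finsetSum_coeff, coeff_natCast_mul, coeff_X_pow, mul_ite, mul_one,
    mul_zero, sum_ite_eq, mem_range]
  split_ifs with h
  · rfl
  · rw [arec_eq_zero_of_lt (by omega), Nat.cast_zero]

theorem arecPoly_eq_sum_Icc {R : Type*} [Semiring R] {n : ℕ} (hn : 1 ≤ n) :
    (arecPoly n : R[X]) = ∑ k ∈ Icc 1 n, (arec n k : R[X]) * X ^ k := by
  obtain ⟨m, rfl⟩ := Nat.exists_eq_add_of_le' hn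
  rw [arecPoly, sum_range_succ', ← Ico_add_one_right_eq_Icc, sum_Ico_eq_sum_range]
  simp [arec, add_comm 1]

section RecStep

variable {R : Type*} [CommRing R] (n : ℕ) (p : R[X])

noncomputable def recStep : R[X] :=
  X * ((n : R[X]) * X + 1) * p + X * (1 - X ^ 2) * derivative p

theorem recStep_eq : recStep n p =
    X * ((n : R[X]) * (X * p) + p + derivative p - X * (X * derivative p)) := by
  rw [recStep]
  ring

theorem coeff_recStep_zero : (recStep n p).coeff 0 = 0 := by
  simp [recStep_eq]

theorem coeff_recStep_one : (recStep n p).coeff 1 = p.coeff 1 + p.coeff 0 := by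
  simp [recStep_eq, coeff_derivative, add_comm]

theorem coeff_recStep_add_two (k : ℕ) : (recStep n p).coeff (k + 2) =
    (k + 2) * p.coeff (k + 2) + p.coeff (k + 1) + ((n : R) - k) * p.coeff k := by
  rcases k with _ | k <;> simp [recStep_eq, coeff_derivative] <;> ring

end RecStep

theorem arecPoly_succ {R : Type*} [CommRing R] (n : ℕ) :
    (arecPoly (n + 1) : R[X]) = recStep n (arecPoly n) := by
  ext (_ | _ | k)
  · simp [coeff_arecPoly, coeff_recStep_zero, arec]
  · simp [coeff_arecPoly, coeff_recStep_one, arec_succ_one]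
  · simp [coeff_arecPoly, coeff_recStep_add_two, cast_arec_succ_add_two]

theorem stmt9_general (T : ℕ → Polynomial ℝ) (hT0 : T 0 = 1)
    (hTrec : ∀ n : ℕ, T (n+1) =
      X * ((n : Polynomial ℝ) * X + 1) * T n + X * (1 - X^2) * derivative (T n)) :
    ∀ n, 1 ≤ n → T n = ∑ k ∈ Finset.Icc 1 n, (arec n k : Polynomial ℝ) * X^k := by
  have hT : ∀ n, T n = arecPoly n := by
    intro n
    induction n with
    | zero => simp [hT0, arecPoly, arec]
    | succ n ih => rw [hTrec, arecPoly_succ, ← ih, recStep]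
  intro n hn
  rw [hT, arecPoly_eq_sum_Icc hn]

/-- The polynomials defined by `T_0 = 1`, `T_1 = x`, and
`T_{n+1}(x) = x(nx+1) T_n(x) + x(1-x²) T'_n(x)` satisfy
`T_n(x) = ∑_{k=1}^n a_k(n) x^k` for `n ≥ 1`. -/
theorem stmt9 (T : ℕ → Polynomial ℝ) (hT0 : T 0 = 1) (hT1 : T 1 = X)
    (hTrec : ∀ n : ℕ, T (n+1) =
      X * ((n : Polynomial ℝ) * X + 1) * T n + X * (1 - X^2) * derivative (T n)) :
    ∀ n, 1 ≤ n → T n = ∑ k ∈ Finset.Icc 1 n, (arec n k : Polynomial ℝ) * X^k :=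
  stmt9_general T hT0 hTrec
end

section
/- Let D be the derivation on ℤ[y,z] with D(y) = yz and D(z) = y². Then for all n ≥ 0, D^n(y) = Σ_{k=0}^{⌊n/2⌋} W̃(n,k)·y^{2k+1}·z^{n-2k}, where W̃(n,k) is the number of permutations of [n] with k left peaks. -/
/-!
Inserting the value `n + 1` into a permutation of `[n]` at each of the `n + 1` positions produces
every permutation of `[n + 1]` exactly once. The inserted value is a left peak unless it is placed
last, and it kills the left peak it is placed on or right after. So for a permutation with `k` left
peaks, `2k + 1` positions keep `k` peaks and the other `n - 2k` create one more, whence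
`W̃(n+1, k) = (2k+1) W̃(n, k) + (n-2k+2) W̃(n, k-1)`. On the other side
`D(y^{2k+1} z^m) = (2k+1) y^{2k+1} z^{m+1} + m y^{2k+3} z^{m-1}` produces the same two
coefficients, and the expansion of `Dⁿ(y)` follows by induction on `n`.
-/

open Finset Polynomial

/-- number of left peaks of `π` (with the convention `π(0) = 0`) -/
def leftPeaks {n : ℕ} (π : Equiv.Perm (Fin n)) : ℕ :=
  ((Finset.range (n - 1)).filter (fun i =>
    (if i = 0 then 0 else pval π (i-1)) < pval π i ∧ pval π (i+1) < pval π i)).card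

/-- `W̃(n,k)`: the number of permutations of `[n]` with `k` left peaks -/
def leftPeakNum (n k : ℕ) : ℕ :=
  (Finset.univ.filter (fun π : Equiv.Perm (Fin n) => leftPeaks π = k)).card

namespace Equiv.Perm

variable {n : ℕ}

/-- `τ` with the new largest value `Fin.last n` placed at position `p`; the entries of `τ` keep
their order and those from position `p` on move one step right. -/
def insertMax (τ : Perm (Fin n)) (p : Fin (n + 1)) : Perm (Fin (n + 1)) :=
  (finSuccEquiv' p).trans ((optionCongr τ).trans finSuccEquivLast.symm)

lemma insertMax_apply_self (τ : Perm (Fin n)) (p : Fin (n + 1)) :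
    insertMax τ p p = Fin.last n := by
  simp [insertMax]

lemma insertMax_apply_succAbove (τ : Perm (Fin n)) (p : Fin (n + 1)) (j : Fin n) :
    insertMax τ p (p.succAbove j) = (τ j).castSucc := by
  simp [insertMax]

lemma pval_le (π : Perm (Fin n)) (i : ℕ) : pval π i ≤ n := by
  unfold pval; split <;> omega

lemma pval_insertMax (τ : Perm (Fin n)) (p : Fin (n + 1)) (i : ℕ) :
    pval (insertMax τ p) i =
      if i < p then pval τ i else if i = p then n + 1 else pval τ (i - 1) := by
  rcases lt_trichotomy i p with h | rfl | h
  · have hi : i < n := by omega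
    have : (⟨i, by omega⟩ : Fin (n + 1)) = p.succAbove ⟨i, hi⟩ := by
      rw [Fin.succAbove_of_castSucc_lt _ _ h]; rfl
    simp [pval, h, hi, hi.le, this, insertMax_apply_succAbove]
  · simp [pval, insertMax_apply_self, p.is_le]
  · simp only [if_neg (show ¬ i < p by omega), if_neg (show i ≠ p by omega)]
    by_cases hi : i ≤ n
    · have hle : p ≤ Fin.castSucc ⟨i - 1, by omega⟩ :=
        Fin.le_def.2 (by simp only [Fin.castSucc_mk]; omega)
      have : (⟨i, by omega⟩ : Fin (n + 1)) = p.succAbove ⟨i - 1, by omega⟩ := by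
        rw [Fin.succAbove_of_le_castSucc _ _ hle]
        ext; simp only [Fin.val_succ]; omega
      simp [pval, show i < n + 1 by omega, show i - 1 < n by omega, this,
        insertMax_apply_succAbove]
    · simp [pval, show ¬ i < n + 1 by omega, show ¬ i - 1 < n by omega]

def leftPeakSet (π : Perm (Fin n)) : Finset ℕ :=
  (range (n - 1)).filter (fun i =>
    (if i = 0 then 0 else pval π (i - 1)) < pval π i ∧ pval π (i + 1) < pval π i)

lemma card_leftPeakSet (π : Perm (Fin n)) : (leftPeakSet π).card = leftPeaks π := rfl

lemma mem_leftPeakSet {π : Perm (Fin n)} {i : ℕ} :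
    i ∈ leftPeakSet π ↔ i < n - 1 ∧
      (if i = 0 then 0 else pval π (i - 1)) < pval π i ∧ pval π (i + 1) < pval π i := by
  simp [leftPeakSet]

lemma succ_notMem_leftPeakSet {π : Perm (Fin n)} {i : ℕ} (h : i ∈ leftPeakSet π) :
    i + 1 ∉ leftPeakSet π := by
  simp only [mem_leftPeakSet, Nat.add_sub_cancel, if_neg (Nat.succ_ne_zero i)] at h ⊢
  omega

lemma mem_leftPeakSet_insertMax {τ : Perm (Fin n)} {p : Fin (n + 1)} {j : ℕ} :
    j ∈ leftPeakSet (insertMax τ p) ↔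
      (j + 1 < p ∧ j ∈ leftPeakSet τ) ∨ (j = p ∧ p < n) ∨
        (p + 1 < j ∧ j - 1 ∈ leftPeakSet τ) := by
  -- after `pval_insertMax`, every case compares values of `τ`, all of which are `≤ n < n + 1`
  have hp := p.is_le
  rcases j with _ | i
  · have := pval_le τ 0
    simp only [mem_leftPeakSet, pval_insertMax, Nat.add_sub_cancel]
    split_ifs <;> omega
  · have := pval_le τ (i - 1); have := pval_le τ i; have := pval_le τ (i + 1)
    have := pval_le τ (i + 2)
    simp only [mem_leftPeakSet, pval_insertMax, Nat.add_sub_cancel]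
    split_ifs <;> first | omega | contradiction

lemma lt_of_mem_leftPeakSet {π : Perm (Fin n)} {i : ℕ} (h : i ∈ leftPeakSet π) : i < n - 1 :=
  (mem_leftPeakSet.1 h).1

lemma leftPeakSet_insertMax (τ : Perm (Fin n)) (p : Fin (n + 1)) :
    leftPeakSet (insertMax τ p) =
      ((leftPeakSet τ).filter (· + 1 < (p : ℕ)) ∪
        ((leftPeakSet τ).filter ((p : ℕ) < ·)).map (addRightEmbedding 1)) ∪
        ({(p : ℕ)} : Finset ℕ).filter (· < n) := by
  ext j
  simp only [mem_leftPeakSet_insertMax, mem_union, mem_filter, mem_map, mem_singleton,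
    addRightEmbedding_apply]
  constructor
  · rintro (⟨h1, h2⟩ | ⟨rfl, h⟩ | ⟨h1, h2⟩)
    · exact Or.inl (Or.inl ⟨h2, h1⟩)
    · exact Or.inr ⟨rfl, h⟩
    · exact Or.inl (Or.inr ⟨j - 1, ⟨h2, by omega⟩, by omega⟩)
  · rintro ((⟨h1, h2⟩ | ⟨i, ⟨hi, hpi⟩, rfl⟩) | ⟨rfl, h⟩)
    · exact Or.inl ⟨h2, h1⟩
    · exact Or.inr (Or.inr ⟨by omega, by simpa using hi⟩)
    · exact Or.inr (Or.inl ⟨rfl, h⟩)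

lemma card_leftPeakSet_insertMax (τ : Perm (Fin n)) (p : Fin (n + 1)) :
    (leftPeakSet (insertMax τ p)).card =
      ((leftPeakSet τ).filter (· + 1 < (p : ℕ))).card +
        ((leftPeakSet τ).filter ((p : ℕ) < ·)).card + if (p : ℕ) < n then 1 else 0 := by
  rw [leftPeakSet_insertMax, card_union_of_disjoint, card_union_of_disjoint, card_map,
    filter_singleton]
  · split_ifs <;> rfl
  · simp only [disjoint_left, mem_filter, mem_map, addRightEmbedding_apply]
    rintro _ ⟨-, h⟩ ⟨i, ⟨-, h'⟩, rfl⟩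
    omega
  · simp only [disjoint_left, mem_union, mem_filter, mem_map, mem_singleton,
      addRightEmbedding_apply]
    rintro _ (⟨-, h⟩ | ⟨i, ⟨-, h⟩, rfl⟩) ⟨h', -⟩ <;> omega

/-- Inserting a new maximum at one of these positions destroys a left peak. -/
def peakSlots (π : Perm (Fin n)) : Finset ℕ :=
  leftPeakSet π ∪ (leftPeakSet π).image (· + 1)

lemma card_filter_leftPeakSet_eq_or_succ_eq (π : Perm (Fin n)) (p : ℕ) :
    ((leftPeakSet π).filter (fun j => j = p ∨ j + 1 = p)).card =
      if p ∈ peakSlots π then 1 else 0 := by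
  simp only [peakSlots, mem_union, mem_image]
  split_ifs with h
  · refine le_antisymm (card_le_one.2 ?_) (card_pos.2 ?_)
    · simp only [mem_filter]
      rintro a ⟨ha, hpa⟩ b ⟨hb, hpb⟩
      by_contra hne
      rcases (show a = b + 1 ∨ b = a + 1 by omega) with rfl | rfl
      · exact succ_notMem_leftPeakSet hb ha
      · exact succ_notMem_leftPeakSet ha hb
    · obtain h | ⟨j, hj, rfl⟩ := h
      · exact ⟨p, mem_filter.2 ⟨h, Or.inl rfl⟩⟩
      · exact ⟨j, mem_filter.2 ⟨hj, Or.inr rfl⟩⟩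
  · refine card_eq_zero.2 (filter_eq_empty_iff.2 fun j hj hjp => h ?_)
    obtain rfl | rfl := hjp
    · exact Or.inl hj
    · exact Or.inr ⟨j, hj, rfl⟩

lemma peakSlots_subset_range (π : Perm (Fin n)) : peakSlots π ⊆ range n := by
  intro j hj
  simp only [peakSlots, mem_union, mem_image] at hj
  obtain h | ⟨i, hi, rfl⟩ := hj
  all_goals have := lt_of_mem_leftPeakSet ‹_›; simp only [mem_range]; omega

lemma card_peakSlots (π : Perm (Fin n)) : (peakSlots π).card = 2 * leftPeaks π := by
  rw [peakSlots, card_union_of_disjoint, card_image_of_injective _ (add_left_injective 1),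
    card_leftPeakSet, two_mul]
  simp only [disjoint_right, mem_image]
  rintro _ ⟨i, hi, rfl⟩
  exact succ_notMem_leftPeakSet hi

def newPeakSlots (π : Perm (Fin n)) : Finset ℕ := range n \ peakSlots π

lemma card_newPeakSlots (π : Perm (Fin n)) : (newPeakSlots π).card = n - 2 * leftPeaks π := by
  rw [newPeakSlots, card_sdiff_of_subset (peakSlots_subset_range π), card_range, card_peakSlots]

lemma two_mul_leftPeaks_le (π : Perm (Fin n)) : 2 * leftPeaks π ≤ n := by
  simpa [card_peakSlots] using card_le_card (peakSlots_subset_range π)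

lemma leftPeaks_insertMax (τ : Perm (Fin n)) (p : Fin (n + 1)) :
    leftPeaks (insertMax τ p) = leftPeaks τ + if (p : ℕ) ∈ newPeakSlots τ then 1 else 0 := by
  have hslot : (p : ℕ) ∈ peakSlots τ → (p : ℕ) < n := fun h => by
    simpa using peakSlots_subset_range τ h
  -- the peaks of `τ` at `p - 1` or `p` are destroyed, the others survive (shifted past `p`)
  have hsplit : (leftPeakSet τ).card = ((leftPeakSet τ).filter (· + 1 < (p : ℕ))).card +
      ((leftPeakSet τ).filter ((p : ℕ) < ·)).card +
        ((leftPeakSet τ).filter (fun j : ℕ => j = p ∨ j + 1 = p)).card := by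
    simp only [card_filter, card_eq_sum_ones (leftPeakSet τ), ← sum_add_distrib]
    exact sum_congr rfl fun j _ => by split_ifs <;> omega
  rw [card_filter_leftPeakSet_eq_or_succ_eq] at hsplit
  rw [← card_leftPeakSet, ← card_leftPeakSet, card_leftPeakSet_insertMax]
  simp only [newPeakSlots, mem_sdiff, mem_range]
  by_cases hs : (p : ℕ) ∈ peakSlots τ
  · simp only [hs, hslot hs, if_true, not_true_eq_false, and_false, if_false] at hsplit ⊢
    omega
  · simp only [hs, not_false_eq_true, and_true, if_false] at hsplit ⊢
    omega

lemma card_filter_leftPeaks_insertMax (τ : Perm (Fin n)) (k : ℕ) :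
    (univ.filter (fun p : Fin (n + 1) => leftPeaks (insertMax τ p) = k)).card =
      if leftPeaks τ = k then 2 * k + 1
      else if leftPeaks τ + 1 = k then n - 2 * leftPeaks τ else 0 := by
  have hG : newPeakSlots τ ⊆ range (n + 1) :=
    sdiff_subset.trans (range_subset_range.2 n.le_succ)
  have hcard : (univ.filter (fun p : Fin (n + 1) => leftPeaks (insertMax τ p) = k)).card =
      ((range (n + 1)).filter
        (fun p => leftPeaks τ + (if p ∈ newPeakSlots τ then 1 else 0) = k)).card := by
    simp only [leftPeaks_insertMax, card_filter]
    exact Fin.sum_univ_eq_sum_range (fun p =>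
      if leftPeaks τ + (if p ∈ newPeakSlots τ then 1 else 0) = k then 1 else 0) (n + 1)
  rw [hcard]
  split_ifs with h h'
  · rw [filter_congr (q := (· ∉ newPeakSlots τ)) (fun p _ => by grind), filter_notMem_eq_sdiff,
      card_sdiff_of_subset hG, card_range, card_newPeakSlots]
    have := two_mul_leftPeaks_le τ
    omega
  · rw [filter_congr (q := (· ∈ newPeakSlots τ)) (fun p _ => by grind), filter_mem_eq_inter,
      inter_eq_right.2 hG, card_newPeakSlots]
  · exact card_eq_zero.2 (filter_false_of_mem fun p _ => by split_ifs <;> omega)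

lemma insertMax_injective :
    Function.Injective (fun x : Fin (n + 1) × Perm (Fin n) => insertMax x.2 x.1) := by
  rintro ⟨p, τ⟩ ⟨q, σ⟩ h
  simp only at h
  obtain rfl : p = q := (insertMax σ q).injective <| by
    rw [insertMax_apply_self, ← insertMax_apply_self τ p, h]
  obtain rfl : τ = σ := Equiv.ext fun j => Fin.castSucc_injective n <| by
    rw [← insertMax_apply_succAbove, ← insertMax_apply_succAbove, h]
  rfl

lemma insertMax_bijective :
    Function.Bijective (fun x : Fin (n + 1) × Perm (Fin n) => insertMax x.2 x.1) := by
  rw [Fintype.bijective_iff_injective_and_card]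
  refine ⟨insertMax_injective, ?_⟩
  simp [Fintype.card_perm, Nat.factorial_succ]

end Equiv.Perm

open Equiv.Perm

lemma leftPeakNum_eq_zero_of_lt {n k : ℕ} (h : n < 2 * k) : leftPeakNum n k = 0 :=
  card_eq_zero.2 (filter_false_of_mem fun π _ => by have := two_mul_leftPeaks_le π; omega)

lemma leftPeakNum_zero_zero : leftPeakNum 0 0 = 1 := by
  decide

lemma leftPeakNum_succ_eq_sum (n k : ℕ) :
    leftPeakNum (n + 1) k = ∑ τ : Equiv.Perm (Fin n),
      (univ.filter (fun p : Fin (n + 1) => leftPeaks (insertMax τ p) = k)).card := by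
  rw [leftPeakNum, card_filter, ← Fintype.sum_bijective _ insertMax_bijective
    (fun x => if leftPeaks (insertMax x.2 x.1) = k then 1 else 0) _ fun _ => rfl,
    Fintype.sum_prod_type_right]
  simp only [card_filter]

lemma sum_ite_leftPeaks_eq (n j c : ℕ) :
    ∑ π : Equiv.Perm (Fin n), (if leftPeaks π = j then c else 0) = leftPeakNum n j * c := by
  rw [← sum_filter, sum_const, smul_eq_mul]
  rfl

lemma leftPeakNum_succ_zero (n : ℕ) : leftPeakNum (n + 1) 0 = leftPeakNum n 0 := by
  simp only [leftPeakNum_succ_eq_sum, card_filter_leftPeaks_insertMax, Nat.add_one_ne_zero,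
    if_false, mul_zero, zero_add, sum_ite_leftPeaks_eq, mul_one]

lemma leftPeakNum_succ_succ (n k : ℕ) : leftPeakNum (n + 1) (k + 1) =
    (2 * k + 3) * leftPeakNum n (k + 1) + (n - 2 * k) * leftPeakNum n k := by
  rw [leftPeakNum_succ_eq_sum]
  simp only [card_filter_leftPeaks_insertMax, Nat.add_right_cancel_iff]
  rw [sum_congr rfl fun τ _ => (show _ = (if leftPeaks τ = k + 1 then 2 * k + 3 else 0) +
    (if leftPeaks τ = k then n - 2 * k else 0) by split_ifs <;> omega), sum_add_distrib,
    sum_ite_leftPeaks_eq, sum_ite_leftPeaks_eq]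
  ring

section

variable {R A : Type*} [CommSemiring R] [CommSemiring A] [Algebra R A] (D : Derivation R A A)
  {y z : A}

lemma Derivation.apply_pow_mul_pow (hy : D y = y * z) (hz : D z = y ^ 2) (a b : ℕ) :
    D (y ^ (a + 1) * z ^ b) =
      (a + 1 : ℕ) * y ^ (a + 1) * z ^ (b + 1) + b * y ^ (a + 3) * z ^ (b - 1) := by
  rw [Derivation.leibniz, Derivation.leibniz_pow, Derivation.leibniz_pow, hy, hz]
  rcases b with _ | b
  all_goals simp only [smul_eq_mul, nsmul_eq_mul, Nat.add_sub_cancel]; push_cast; ring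

lemma Derivation.apply_leftPeakNum_term (hy : D y = y * z) (hz : D z = y ^ 2) (n k : ℕ) :
    D (leftPeakNum n k * y ^ (2 * k + 1) * z ^ (n - 2 * k)) =
      (2 * k + 1 : ℕ) * leftPeakNum n k * y ^ (2 * k + 1) * z ^ (n + 1 - 2 * k) +
        (n - 2 * k : ℕ) * leftPeakNum n k * y ^ (2 * k + 3) * z ^ (n - 2 * k - 1) := by
  rcases lt_or_ge n (2 * k) with h | h
  · simp [leftPeakNum_eq_zero_of_lt h]
  · rw [mul_assoc, ← nsmul_eq_mul, D.map_smul_of_tower, D.apply_pow_mul_pow hy hz,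
      show n - 2 * k + 1 = n + 1 - 2 * k by omega, nsmul_eq_mul]
    ring

theorem Derivation.iterate_apply_eq_sum_leftPeakNum (hy : D y = y * z) (hz : D z = y ^ 2)
    {n N : ℕ} (hN : n < 2 * N) :
    D^[n] y = ∑ k ∈ range N, (leftPeakNum n k : A) * y ^ (2 * k + 1) * z ^ (n - 2 * k) := by
  obtain ⟨M, rfl⟩ : ∃ M, N = M + 1 := ⟨N - 1, by omega⟩
  induction n generalizing M with
  | zero =>
    rw [sum_range_succ']
    simp [leftPeakNum_zero_zero, leftPeakNum_eq_zero_of_lt]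
  | succ n ih =>
    rw [Function.iterate_succ_apply', ih M (by omega), map_sum]
    simp only [D.apply_leftPeakNum_term hy hz, sum_add_distrib]
    rw [sum_range_succ' _ M, sum_range_succ _ M, sum_range_succ' _ M,
      show n - 2 * M = 0 by omega, leftPeakNum_succ_zero]
    simp only [leftPeakNum_succ_succ, Nat.cast_zero, zero_mul, add_zero]
    rw [add_right_comm, ← sum_add_distrib]
    congr 1
    · refine sum_congr rfl fun k _ => ?_
      rw [show n - 2 * k - 1 = n + 1 - 2 * (k + 1) by omega]
      push_cast
      ring
    · simp

end

/-- For the grammar `G = {y → yz, z → y²}` (here `y = X 0`, `z = X 1`):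
`Dⁿ(y) = ∑_{k=0}^{⌊n/2⌋} W̃(n,k) y^{2k+1} z^{n-2k}` for `n ≥ 0`. -/
theorem stmt12
    (D : Derivation ℤ (MvPolynomial (Fin 2) ℤ) (MvPolynomial (Fin 2) ℤ))
    (hy : D (MvPolynomial.X 0) = MvPolynomial.X 0 * MvPolynomial.X 1)
    (hz : D (MvPolynomial.X 1) = MvPolynomial.X 0 ^ 2) :
    ∀ n : ℕ,
      (⇑D)^[n] (MvPolynomial.X 0)
        = ∑ k ∈ Finset.range (n/2 + 1),
            (leftPeakNum n k : MvPolynomial (Fin 2) ℤ)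
              * MvPolynomial.X 0 ^ (2*k + 1) * MvPolynomial.X 1 ^ (n - 2*k) := by
  intro n
  exact D.iterate_apply_eq_sum_leftPeakNum hy hz (by omega)
end

section
/- Let D be the derivation on ℤ[x,y,z] with D(x) = xy, D(y) = yz, D(z) = y². Then for all n ≥ 1, D^n(x²) = x²·Σ_{k=1}^n R(n+1,k)·y^k·z^{n-k}, where R(n,k) satisfies R(n,k) = k·R(n-1,k) + 2·R(n-1,k-1) + (n-k)·R(n-1,k-2) with R(1,0) = 1 and R(1,k) = 0 for k ≥ 1. -/
open Finset Polynomial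

/-- `R(n,k)`, defined by the recurrence
`R(n,k) = k·R(n-1,k) + 2·R(n-1,k-1) + (n-k)·R(n-1,k-2)` with `R(1,0) = 1` and
`R(1,k) = 0` for `k ≥ 1` (terms with a negative second index being zero). -/
def Rrec : ℕ → ℕ → ℕ
  | 0, _ => 0
  | 1, 0 => 1
  | 1, _+1 => 0
  | n+2, k => k * Rrec (n+1) k + 2 * (if 1 ≤ k then Rrec (n+1) (k-1) else 0)
      + (n + 2 - k) * (if 2 ≤ k then Rrec (n+1) (k-2) else 0)

/-!
Since `D(y^i) = i y^i z` and `D(z^j) = j z^(j-1) y^2`, the derivation maps `x^2 y^i z^j` to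
`x^2 (2 y^(i+1) z^j + i y^i z^(j+1) + j y^(i+2) z^(j-1))`. Writing `Dⁿ(x²) = x² ∑_{i+j=n} c_i y^i z^j`,
one more application of `D` therefore transforms the coefficients by exactly the recurrence of
`R(n+2, ·)`, where the factor `n+2-i` becomes `j+1` on the antidiagonal `i + j = n + 1`.
Starting from `R(1, ·) = [· = 0]` this gives `c_i = R(n+1, i)`; for `n ≥ 1` the `i = 0` term vanishes.
-/

theorem Rrec_eq_zero_of_le {m k : ℕ} (h : m ≤ k) : Rrec m k = 0 := by
  induction m generalizing k with
  | zero => rfl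
  | succ m ih =>
    rcases m with _ | m
    · obtain ⟨k, rfl⟩ := Nat.exists_eq_add_of_le' h
      rfl
    · simp only [Rrec, ih (by omega : m + 1 ≤ k), ih (by omega : m + 1 ≤ k - 1)]
      simp [show m + 2 - k = 0 by omega]

theorem Rrec_add_two_zero (n : ℕ) : Rrec (n + 2) 0 = 0 := by
  simp [Rrec]

theorem Rrec_add_two_of_add_eq {n i j : ℕ} (h : i + j = n + 1) :
    Rrec (n + 2) i = i * Rrec (n + 1) i + 2 * (if 1 ≤ i then Rrec (n + 1) (i - 1) else 0)
      + (j + 1) * (if 2 ≤ i then Rrec (n + 1) (i - 2) else 0) := by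
  rw [Rrec, show n + 2 - i = j + 1 by omega]

section Grammar

variable {S A : Type*} [CommSemiring S] [CommSemiring A] [Algebra S A]
  {D : Derivation S A A} {x y z : A}

theorem Derivation.apply_sq_mul_pow_mul_pow (hx : D x = x * y) (hy : D y = y * z)
    (hz : D z = y ^ 2) (i j : ℕ) :
    D (x ^ 2 * (y ^ i * z ^ j)) = x ^ 2 *
      (2 • (y ^ (i + 1) * z ^ j) + i • (y ^ i * z ^ (j + 1)) + j • (y ^ (i + 2) * z ^ (j - 1))) := by
  simp only [Derivation.leibniz, Derivation.leibniz_pow, hx, hy, hz, smul_eq_mul, nsmul_eq_mul]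
  rcases i with _ | i <;> rcases j with _ | j <;> simp <;> ring

theorem Derivation.apply_sq_mul_sum_antidiagonal (hx : D x = x * y) (hy : D y = y * z)
    (hz : D z = y ^ 2) (c : ℕ → ℕ) (n : ℕ) (hc : c (n + 1) = 0) :
    D (x ^ 2 * ∑ p ∈ antidiagonal n, c p.1 • (y ^ p.1 * z ^ p.2)) =
      x ^ 2 * ∑ p ∈ antidiagonal (n + 1),
        (p.1 * c p.1 + 2 * (if 1 ≤ p.1 then c (p.1 - 1) else 0)
          + (p.2 + 1) * (if 2 ≤ p.1 then c (p.1 - 2) else 0)) • (y ^ p.1 * z ^ p.2) := by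
  have hterm : ∀ p ∈ antidiagonal n, D (x ^ 2 * (c p.1 • (y ^ p.1 * z ^ p.2))) =
      x ^ 2 * (c p.1 • (2 • (y ^ (p.1 + 1) * z ^ p.2)) + c p.1 • (p.1 • (y ^ p.1 * z ^ (p.2 + 1)))
        + c p.1 • (p.2 • (y ^ (p.1 + 2) * z ^ (p.2 - 1)))) := fun p _ => by
    rw [mul_smul_comm, map_nsmul, Derivation.apply_sq_mul_pow_mul_pow hx hy hz, ← smul_add,
      ← smul_add, mul_smul_comm]
  rw [mul_sum, map_sum, sum_congr rfl hterm, ← mul_sum]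
  congr 1
  simp only [add_smul, sum_add_distrib]
  have hA : ∑ p ∈ antidiagonal n, c p.1 • (p.1 • (y ^ p.1 * z ^ (p.2 + 1))) =
      ∑ p ∈ antidiagonal (n + 1), (p.1 * c p.1) • (y ^ p.1 * z ^ p.2) := by
    rw [Nat.sum_antidiagonal_succ', hc, mul_zero, zero_smul, zero_add]
    exact sum_congr rfl fun p _ => by rw [smul_smul, mul_comm]
  have hB : ∑ p ∈ antidiagonal n, c p.1 • (2 • (y ^ (p.1 + 1) * z ^ p.2)) =
      ∑ p ∈ antidiagonal (n + 1),
        (2 * (if 1 ≤ p.1 then c (p.1 - 1) else 0)) • (y ^ p.1 * z ^ p.2) := by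
    rw [Nat.sum_antidiagonal_succ, if_neg (by omega), mul_zero, zero_smul, zero_add]
    refine sum_congr rfl fun p _ => ?_
    rw [if_pos (by omega), Nat.add_sub_cancel, smul_smul, mul_comm]
  have hC : ∑ p ∈ antidiagonal n, c p.1 • (p.2 • (y ^ (p.1 + 2) * z ^ (p.2 - 1))) =
      ∑ p ∈ antidiagonal (n + 1),
        ((p.2 + 1) * (if 2 ≤ p.1 then c (p.1 - 2) else 0)) • (y ^ p.1 * z ^ p.2) := by
    rcases n with _ | m
    · simp [Nat.sum_antidiagonal_succ]
    · rw [Nat.sum_antidiagonal_succ', Nat.sum_antidiagonal_succ, Nat.sum_antidiagonal_succ,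
        if_neg (by omega), if_neg (by omega), zero_smul, smul_zero, mul_zero, zero_smul, zero_add,
        mul_zero, zero_smul, zero_add, zero_add]
      refine sum_congr rfl fun p _ => ?_
      dsimp only
      rw [if_pos (by omega), show p.1 + 1 + 1 - 2 = p.1 by omega, smul_smul, mul_comm,
        Nat.add_sub_cancel]
  rw [hA, hB, hC]
  abel

theorem Derivation.iterate_sq_eq_sum_antidiagonal_Rrec (hx : D x = x * y) (hy : D y = y * z) (hz : D z = y ^ 2)
    (n : ℕ) :
    D^[n] (x ^ 2) = x ^ 2 * ∑ p ∈ antidiagonal n, Rrec (n + 1) p.1 • (y ^ p.1 * z ^ p.2) := by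
  induction n with
  | zero => simp [Rrec]
  | succ n ih =>
    rw [Function.iterate_succ_apply', ih,
      Derivation.apply_sq_mul_sum_antidiagonal hx hy hz _ n (Rrec_eq_zero_of_le le_rfl)]
    refine congrArg _ (sum_congr rfl fun p hp => ?_)
    rw [Rrec_add_two_of_add_eq (mem_antidiagonal.mp hp)]

end Grammar

/-- For the grammar `G = {x → xy, y → yz, z → y²}` (here `x = X 0`, `y = X 1`, `z = X 2`):
`Dⁿ(x²) = x²·∑_{k=1}^n R(n+1,k) y^k z^{n-k}` for `n ≥ 1`. -/
theorem stmt14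
    (D : Derivation ℤ (MvPolynomial (Fin 3) ℤ) (MvPolynomial (Fin 3) ℤ))
    (hx : D (MvPolynomial.X 0) = MvPolynomial.X 0 * MvPolynomial.X 1)
    (hy : D (MvPolynomial.X 1) = MvPolynomial.X 1 * MvPolynomial.X 2)
    (hz : D (MvPolynomial.X 2) = MvPolynomial.X 1 ^ 2) :
    ∀ n : ℕ, 1 ≤ n →
      (⇑D)^[n] (MvPolynomial.X 0 ^ 2)
        = MvPolynomial.X 0 ^ 2 * ∑ k ∈ Finset.Icc 1 n,
            (Rrec (n+1) k : MvPolynomial (Fin 3) ℤ)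
              * MvPolynomial.X 1 ^ k * MvPolynomial.X 2 ^ (n - k) := by
  intro n hn
  obtain ⟨m, rfl⟩ := Nat.exists_eq_add_of_le' hn
  rw [Derivation.iterate_sq_eq_sum_antidiagonal_Rrec hx hy hz, Nat.sum_antidiagonal_eq_sum_range_succ
    (fun i j => Rrec (m + 2) i • (MvPolynomial.X 1 ^ i * MvPolynomial.X 2 ^ j)), range_eq_Ico,
    sum_eq_sum_Ico_succ_bot (by omega), Rrec_add_two_zero, zero_smul, zero_add, zero_add,
    Nat.succ_eq_add_one, Ico_add_one_right_eq_Icc]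
  simp only [nsmul_eq_mul, mul_assoc]
end

section
/- Define T_n(x) by T_0(x) = 1, T_1(x) = x, T_{n+1}(x) = x(nx+1)·T_n(x) + x(1-x²)·T'_n(x), and R_n(x) by R_1(x) = 1, R_{n+2}(x) = x(nx+2)·R_{n+1}(x) + x(1-x²)·R'_{n+1}(x). Then for all n ≥ 1: R_{n+1}(x) = Σ_{k=0}^n C(n,k)·T_k(x)·T_{n-k}(x), where C(n,k) is the binomial coefficient. -/
open Finset Polynomial

/-!
Both sides satisfy the same first-order recurrence from the same initial value: the
`T`-recurrence has the shape `T (k+1) = (k X² + X) T k + X (1 - X²) T' k`, and binomial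
convolution turns two recurrences of this shape, with constant terms `a` and `b`, into one with
constant term `a + b` (a Leibniz rule, via Pascal's identity). With `a = b = X` this is the
`R`-recurrence, shifted by one.
-/

section BinomConv

variable {S : Type*} [CommSemiring S]

def binomConv (A B : ℕ → S) (n : ℕ) : S :=
  ∑ k ∈ range (n + 1), (n.choose k : S) * A k * B (n - k)

theorem binomConv_zero (A B : ℕ → S) : binomConv A B 0 = A 0 * B 0 := by
  simp [binomConv]

theorem binomConv_succ (A B : ℕ → S) (n : ℕ) :
    binomConv A B (n + 1) =
      ∑ k ∈ range (n + 1),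
        (n.choose k : S) * (A (k + 1) * B (n - k) + A k * B (n - k + 1)) := by
  have hsplit := sum_choose_succ_mul (fun i j => A i * B j) n
  simp only [← mul_assoc] at hsplit
  rw [binomConv, hsplit, add_comm, ← sum_add_distrib]
  refine sum_congr rfl fun k hk => ?_
  rw [Nat.sub_add_comm (Nat.lt_succ_iff.mp (mem_range.mp hk))]
  ring

end BinomConv

theorem binomConv_succ_of_recurrence {R : Type*} [CommSemiring R] {A B : ℕ → R[X]} {p q a b : R[X]}
    (hA : ∀ k : ℕ, A (k + 1) = ((k : R[X]) * p + a) * A k + q * derivative (A k))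
    (hB : ∀ k : ℕ, B (k + 1) = ((k : R[X]) * p + b) * B k + q * derivative (B k)) (n : ℕ) :
    binomConv A B (n + 1) =
      ((n : R[X]) * p + (a + b)) * binomConv A B n + q * derivative (binomConv A B n) := by
  rw [binomConv_succ, binomConv, derivative_sum, mul_sum, mul_sum, ← sum_add_distrib]
  refine sum_congr rfl fun k hk => ?_
  have hn : (n : R[X]) = k + (n - k : ℕ) := by
    rw [← Nat.cast_add, Nat.add_sub_cancel' (Nat.lt_succ_iff.mp (mem_range.mp hk))]
  rw [hA, hB, hn, derivative_mul, derivative_mul, derivative_natCast]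
  ring

theorem stmt16_general (T : ℕ → Polynomial ℝ) (hT0 : T 0 = 1)
    (hTrec : ∀ n : ℕ, T (n+1) =
      X * ((n : Polynomial ℝ) * X + 1) * T n + X * (1 - X^2) * derivative (T n))
    (R : ℕ → Polynomial ℝ) (hR1 : R 1 = 1)
    (hRrec : ∀ n : ℕ, R (n+2) =
      X * ((n : Polynomial ℝ) * X + 2) * R (n+1) + X * (1 - X^2) * derivative (R (n+1))) :
    ∀ n : ℕ, 1 ≤ n →
      R (n+1) = ∑ k ∈ Finset.range (n+1), (n.choose k : Polynomial ℝ) * T k * T (n-k) := by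
  have hT : ∀ k : ℕ,
      T (k + 1) = ((k : ℝ[X]) * X ^ 2 + X) * T k + X * (1 - X ^ 2) * derivative (T k) :=
    fun k => by rw [hTrec]; ring
  have hR : ∀ n, R (n + 1) = binomConv T T n := by
    intro n
    induction n with
    | zero => rw [hR1, binomConv_zero, hT0, one_mul]
    | succ n ih =>
      rw [hRrec, ih, binomConv_succ_of_recurrence hT hT]
      ring
  exact fun n _ => hR n

/-- Convolution formula `R_{n+1}(x) = ∑_{k=0}^n C(n,k) T_k(x) T_{n-k}(x)` for `n ≥ 1`. -/
theorem stmt16 (T : ℕ → Polynomial ℝ) (hT0 : T 0 = 1) (hT1 : T 1 = X)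
    (hTrec : ∀ n : ℕ, T (n+1) =
      X * ((n : Polynomial ℝ) * X + 1) * T n + X * (1 - X^2) * derivative (T n))
    (R : ℕ → Polynomial ℝ) (hR1 : R 1 = 1)
    (hRrec : ∀ n : ℕ, R (n+2) =
      X * ((n : Polynomial ℝ) * X + 2) * R (n+1) + X * (1 - X^2) * derivative (R (n+1))) :
    ∀ n : ℕ, 1 ≤ n →
      R (n+1) = ∑ k ∈ Finset.range (n+1), (n.choose k : Polynomial ℝ) * T k * T (n-k) :=
  stmt16_general T hT0 hTrec R hR1 hRrec
end

section
/- With T_n(x) and R_n(x) defined by T_0(x) = 1, T_1(x) = x, T_{n+1}(x) = x(nx+1)·T_n(x) + x(1-x²)·T'_n(x), and R_1(x) = 1, R_{n+2}(x) = x(nx+2)·R_{n+1}(x) + x(1-x²)·R'_{n+1}(x), for all n ≥ 1: R_{n+2}(x) = 2·Σ_{k=0}^n C(n,k)·T_k(x)·T_{n-k+1}(x). -/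
/-!
Write `𝒟 p = X(1 - X²) p'`, a derivation of `ℝ[X]`, so that `T_{k+1} = (X + kX²) T_k + 𝒟 T_k`.
By the Leibniz rule, `(2X + (i+j+1)X²) T_i T_{j+1} + 𝒟(T_i T_{j+1}) = T_{i+1} T_{j+1} + T_i T_{j+2}`,
and Pascal's rule then shows that the binomial convolution `S_n = ∑_{i+j=n} C(n,i) T_i T_{j+1}`
satisfies `S_{n+1} = (2X + (n+1)X²) S_n + 𝒟 S_n`, which is the recurrence of `R_{n+2}`.
Since `R_2 = 2X = 2 S_0`, induction gives `R_{n+2} = 2 S_n`.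
-/

open Finset Polynomial

section BinomialConvolution

variable {R A : Type*} [CommSemiring R] [CommSemiring A] [Algebra R A]

def binomialConv (T : ℕ → A) (n : ℕ) : A :=
  ∑ ij ∈ antidiagonal n, (n.choose ij.1 : A) * (T ij.1 * T (ij.2 + 1))

theorem binomialConv_eq_sum_range (T : ℕ → A) (n : ℕ) :
    binomialConv T n = ∑ k ∈ range (n + 1), (n.choose k : A) * T k * T (n - k + 1) := by
  simp only [binomialConv, mul_assoc]
  exact Nat.sum_antidiagonal_eq_sum_range_succ (fun i j => (n.choose i : A) * (T i * T (j + 1))) n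

variable (D : Derivation R A A) {a b : A} {T : ℕ → A}

theorem derivation_mul_of_recurrence (hT : ∀ k : ℕ, T (k + 1) = (a + k * b) * T k + D (T k))
    (i j : ℕ) :
    (2 * a + (i + j + 1 : ℕ) * b) * (T i * T (j + 1)) + D (T i * T (j + 1)) =
      T (i + 1) * T (j + 1) + T i * T (j + 1 + 1) := by
  rw [D.leibniz, hT i, hT (j + 1), smul_eq_mul, smul_eq_mul]
  push_cast
  ring

theorem binomialConv_succ (hT : ∀ k : ℕ, T (k + 1) = (a + k * b) * T k + D (T k)) (n : ℕ) :
    binomialConv T (n + 1) =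
      (2 * a + (n + 1 : ℕ) * b) * binomialConv T n + D (binomialConv T n) := by
  rw [binomialConv, sum_antidiagonal_choose_succ_mul
    (fun i j => T i * T (j + 1)) n, binomialConv, mul_sum, map_sum, ← sum_add_distrib,
    ← sum_add_distrib]
  refine sum_congr rfl ?_
  rintro ⟨i, j⟩ hij
  rw [HasAntidiagonal.mem_antidiagonal] at hij
  subst hij
  dsimp only
  rw [← Nat.choose_symm_add, D.leibniz, D.map_natCast, smul_zero, add_zero, smul_eq_mul]
  trans (i + j).choose i * (T (i + 1) * T (j + 1) + T i * T (j + 1 + 1))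
  · ring
  · rw [← derivation_mul_of_recurrence D hT i j]
    ring

end BinomialConvolution

/-- Convolution formula `R_{n+2}(x) = 2∑_{k=0}^n C(n,k) T_k(x) T_{n-k+1}(x)` for `n ≥ 1`. -/
theorem stmt17 (T : ℕ → Polynomial ℝ) (hT0 : T 0 = 1) (hT1 : T 1 = X)
    (hTrec : ∀ n : ℕ, T (n+1) =
      X * ((n : Polynomial ℝ) * X + 1) * T n + X * (1 - X^2) * derivative (T n))
    (R : ℕ → Polynomial ℝ) (hR1 : R 1 = 1)
    (hRrec : ∀ n : ℕ, R (n+2) =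
      X * ((n : Polynomial ℝ) * X + 2) * R (n+1) + X * (1 - X^2) * derivative (R (n+1))) :
    ∀ n : ℕ, 1 ≤ n →
      R (n+2) = 2 * ∑ k ∈ Finset.range (n+1),
        (n.choose k : Polynomial ℝ) * T k * T (n-k+1) := by
  let D : Derivation ℝ ℝ[X] ℝ[X] := (X * (1 - X ^ 2) : ℝ[X]) • derivative'
  have hD : ∀ p, D p = X * (1 - X ^ 2) * derivative p := fun _ => rfl
  have hT : ∀ k : ℕ, T (k + 1) = (X + (k : ℝ[X]) * X ^ 2) * T k + D (T k) := by
    intro k; rw [hTrec, hD]; ring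
  have hR : ∀ n : ℕ, R (n + 1 + 2) = (2 * X + ((n + 1 : ℕ) : ℝ[X]) * X ^ 2) * R (n + 2) + D (R (n + 2)) := by
    intro n; rw [hRrec, hD]; push_cast; ring
  have hconv : ∀ n, R (n + 2) = 2 * binomialConv T n := by
    intro n
    induction n with
    | zero => simp [hRrec 0, hR1, binomialConv, hT0, hT1]; ring
    | succ n ih =>
      rw [hR, ih, binomialConv_succ D hT, D.leibniz, hD 2]
      simp only [derivative_ofNat, smul_eq_mul]
      ring
  intro n _
  rw [hconv, binomialConv_eq_sum_range]
end

section
/- Define T_n(x) by T_0(x) = 1, T_1(x) = x, T_{n+1}(x) = x(nx+1)·T_n(x) + x(1-x²)·T'_n(x), and W̃_n(x) by W̃_0(x) = 1 and W̃_{n+1}(x) = (nx+1)·W̃_n(x) + 2x(1-x)·W̃'_n(x). Then for all n ≥ 1: T_{n+1}(x) = x·Σ_{k=0}^n C(n,k)·T_k(x)·W̃_{n-k}(x²). -/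
open Finset Polynomial

/-!
Write `δ = X(1 - X²) · d/dX`. Both recurrences have the shape `a_{k+1} = (k X² + c) a_k + δ a_k`,
with `c = X` for `T` and `c = 1` for `W̃_k(X²)`. For two such sequences the binomial convolution
`S_n = ∑ C(n,k) a_k b_{n-k}` obeys the same kind of recurrence, with `c` replaced by the sum of the
two constants, because `δ` is a derivation (Leibniz rule) and the indices add up to `n`. Comparing
with the recurrence of `T`, the relation `δ X = X(1 - X²)` makes `X S_n` satisfy it as well.
-/

section BinomialConvolution

variable {R A : Type*} [CommSemiring R]

def binomialConvolution [CommSemiring A] (a b : ℕ → A) (n : ℕ) : A :=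
  ∑ ij ∈ antidiagonal n, (n.choose ij.1 : A) * (a ij.1 * b ij.2)

theorem Derivation.binomialConvolution_succ [CommSemiring A] [Algebra R A]
    (D : Derivation R A A) (p q r : A) {a b : ℕ → A}
    (ha : ∀ k : ℕ, a (k + 1) = (k * p + q) * a k + D (a k))
    (hb : ∀ k : ℕ, b (k + 1) = (k * p + r) * b k + D (b k)) (n : ℕ) :
    binomialConvolution a b (n + 1) =
      (n * p + q + r) * binomialConvolution a b n + D (binomialConvolution a b n) := by
  rw [binomialConvolution, sum_antidiagonal_choose_succ_mul (fun i j => a i * b j),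
    ← sum_add_distrib, binomialConvolution, mul_sum, map_sum, ← sum_add_distrib]
  refine sum_congr rfl fun ⟨i, j⟩ hij => ?_
  rw [Finset.HasAntidiagonal.mem_antidiagonal] at hij
  rw [← Nat.choose_symm_of_eq_add hij.symm, ha, hb, D.leibniz, D.leibniz, D.map_natCast]
  subst hij
  simp only [smul_eq_mul, Nat.cast_add]
  ring

theorem Derivation.eq_mul_binomialConvolution [CommRing A] [Algebra R A]
    (D : Derivation R A A) (p q r : A) {a b : ℕ → A} (ha0 : a 0 = 1) (hb0 : b 0 = 1)
    (ha : ∀ k : ℕ, a (k + 1) = (k * p + q) * a k + D (a k))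
    (hb : ∀ k : ℕ, b (k + 1) = (k * p + r) * b k + D (b k))
    (hq : D q = q * (r - p)) (n : ℕ) :
    a (n + 1) = q * binomialConvolution a b n := by
  induction n with
  | zero => simp [ha, ha0, hb0, binomialConvolution]
  | succ n ih =>
    rw [ha, ih, binomialConvolution_succ D p q r ha hb, D.leibniz, hq, smul_eq_mul, smul_eq_mul]
    push_cast
    ring

end BinomialConvolution

theorem comp_X_sq_succ_of_recurrence {R : Type*} [CommRing R] {W : ℕ → R[X]}
    (hW : ∀ n : ℕ, W (n + 1) = ((n : R[X]) * X + 1) * W n + 2 * X * (1 - X) * derivative (W n))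
    (n : ℕ) :
    (W (n + 1)).comp (X ^ 2) =
      ((n : R[X]) * X ^ 2 + 1) * (W n).comp (X ^ 2) +
        X * (1 - X ^ 2) * derivative ((W n).comp (X ^ 2)) := by
  rw [hW, derivative_comp]
  simp only [add_comp, mul_comp, one_comp, sub_comp, X_comp, natCast_comp, ofNat_comp,
    derivative_X_pow]
  push_cast
  rw [C_ofNat]
  ring

theorem stmt18_general (T : ℕ → Polynomial ℝ) (hT0 : T 0 = 1)
    (hTrec : ∀ n : ℕ, T (n+1) =
      X * ((n : Polynomial ℝ) * X + 1) * T n + X * (1 - X^2) * derivative (T n))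
    (Wt : ℕ → Polynomial ℝ) (hWt0 : Wt 0 = 1)
    (hWtrec : ∀ n : ℕ, Wt (n+1) =
      ((n : Polynomial ℝ) * X + 1) * Wt n + 2 * X * (1 - X) * derivative (Wt n)) :
    ∀ n : ℕ, 1 ≤ n →
      T (n+1) = X * ∑ k ∈ Finset.range (n+1),
        (n.choose k : Polynomial ℝ) * T k * (Wt (n-k)).comp (X^2) := by
  let δ : Derivation ℝ ℝ[X] ℝ[X] := (X * (1 - X ^ 2) : ℝ[X]) • derivative'
  have hδ (f : ℝ[X]) : δ f = X * (1 - X ^ 2) * derivative f := rfl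
  have hT (k : ℕ) : T (k + 1) = ((k : ℝ[X]) * X ^ 2 + X) * T k + δ (T k) := by
    rw [hTrec, hδ]; ring
  have hX : δ X = X * (1 - X ^ 2) := by rw [hδ, derivative_X, mul_one]
  intro n _
  rw [δ.eq_mul_binomialConvolution (X ^ 2) X 1 (b := fun k => (Wt k).comp (X ^ 2)) hT0
    (by rw [hWt0, one_comp]) hT (comp_X_sq_succ_of_recurrence hWtrec) hX n,
    binomialConvolution, Nat.sum_antidiagonal_eq_sum_range_succ
      (fun i j => (n.choose i : ℝ[X]) * (T i * (Wt j).comp (X ^ 2)))]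
  simp only [mul_assoc]

/-- Convolution formula `T_{n+1}(x) = x∑_{k=0}^n C(n,k) T_k(x) W̃_{n-k}(x²)` for `n ≥ 1`. -/
theorem stmt18 (T : ℕ → Polynomial ℝ) (hT0 : T 0 = 1) (hT1 : T 1 = X)
    (hTrec : ∀ n : ℕ, T (n+1) =
      X * ((n : Polynomial ℝ) * X + 1) * T n + X * (1 - X^2) * derivative (T n))
    (Wt : ℕ → Polynomial ℝ) (hWt0 : Wt 0 = 1)
    (hWtrec : ∀ n : ℕ, Wt (n+1) =
      ((n : Polynomial ℝ) * X + 1) * Wt n + 2 * X * (1 - X) * derivative (Wt n)) :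
    ∀ n : ℕ, 1 ≤ n →
      T (n+1) = X * ∑ k ∈ Finset.range (n+1),
        (n.choose k : Polynomial ℝ) * T k * (Wt (n-k)).comp (X^2) :=
  stmt18_general T hT0 hTrec Wt hWt0 hWtrec
end
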